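/- arXiv:2605.30164 — 7 statements merged into one kernel-verified Lean document; each statement's English description precedes it below -/
import Mathlib

section
/- Let (y₀°,y₁°) be a pair of nonzero complex polynomials that is super-fertile with respect to a pair (T₀°,T₁°) of nonzero complex polynomials. Then there exist unique monic complex polynomials f₀, f₁ and a unique pair of complex polynomials (y₀,y₁) such that: f₀² divides T₀°·f₁² and f₁² divides T₁°·f₀² (so that T₀ := T₀°·f₁²/f₀² and T₁ := T₁°·f₀²/f₁² are polynomials); the pair (y₀,y₁) lies in a population of critical points corresponding to (T₀,T₁); and y₀° = f₀·y₀ and y₁° = f₁·y₁. -/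
open Polynomial

noncomputable section

/-- The Wronskian of two polynomials: `Wr(f,g) = f·g′ − f′·g`. -/
def pWr (f g : ℂ[X]) : ℂ[X] := f * derivative g - derivative f * g

/-- A pair `y = (y₀,y₁)` of nonzero polynomials is fertile with respect to a pair
`T = (T₀,T₁)` if there exist `ỹ₀, ỹ₁` with `Wr(y₀,ỹ₀) = T₀·y₁²` and `Wr(y₁,ỹ₁) = T₁·y₀²`. -/
def Fertile (T y : ℂ[X] × ℂ[X]) : Prop :=
  y.1 ≠ 0 ∧ y.2 ≠ 0 ∧
  ∃ ty0 ty1 : ℂ[X], pWr y.1 ty0 = T.1 * y.2 ^ 2 ∧ pWr y.2 ty1 = T.2 * y.1 ^ 2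

/-- Reproduction in direction 0: replace `(y₀,y₁)` by `(ỹ₀,y₁)` with `Wr(y₀,ỹ₀) = T₀·y₁²`. -/
def Reprod0 (T y z : ℂ[X] × ℂ[X]) : Prop :=
  z.2 = y.2 ∧ pWr y.1 z.1 = T.1 * y.2 ^ 2

/-- Reproduction in direction 1: replace `(y₀,y₁)` by `(y₀,ỹ₁)` with `Wr(y₁,ỹ₁) = T₁·y₀²`. -/
def Reprod1 (T y z : ℂ[X] × ℂ[X]) : Prop :=
  z.1 = y.1 ∧ pWr y.2 z.2 = T.2 * y.1 ^ 2

/-- Reproduction (in either direction). -/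
def Reprod (T y z : ℂ[X] × ℂ[X]) : Prop := Reprod0 T y z ∨ Reprod1 T y z

/-- A pair is super-fertile w.r.t. `T` if every pair obtained from it by a finite (possibly
empty) sequence of reproductions w.r.t. `T` is fertile w.r.t. `T`. -/
def SuperFertile (T y : ℂ[X] × ℂ[X]) : Prop :=
  ∀ z, Relation.ReflTransGen (Reprod T) y z → Fertile T z

/-- A pair `(y₀,y₁)` is generic w.r.t. `(T₀,T₁)`: `y₀,y₁` squarefree, coprime to each other,
and `yᵢ` coprime with `Tᵢ`. -/
def Generic (T y : ℂ[X] × ℂ[X]) : Prop :=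
  Squarefree y.1 ∧ Squarefree y.2 ∧ IsCoprime y.1 y.2 ∧
    IsCoprime y.1 T.1 ∧ IsCoprime y.2 T.2

/-- A pair represents a critical point w.r.t. `T` if it is generic and fertile w.r.t. `T`. -/
def IsCriticalPt (T y : ℂ[X] × ℂ[X]) : Prop := Generic T y ∧ Fertile T y

/-- A pair lies in a population of critical points corresponding to `T` if it is obtained by a
finite (possibly empty) sequence of reproductions from a pair representing a critical point. -/
def InPopulation (T y : ℂ[X] × ℂ[X]) : Prop :=
  ∃ y₀, IsCriticalPt T y₀ ∧ Relation.ReflTransGen (Reprod T) y₀ y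

namespace SFP

/-! ### Integer state combinatorics -/

def r0 (s : ℤ) (x : ℤ × ℤ) : ℤ × ℤ := (s + 2*x.2 + 1 - x.1, x.2)
def r1 (t : ℤ) (x : ℤ × ℤ) : ℤ × ℤ := (x.1, t + 2*x.1 + 1 - x.2)

@[simp] lemma r0_r0 (s : ℤ) (x : ℤ × ℤ) : r0 s (r0 s x) = x := by
  simp [r0]
@[simp] lemma r1_r1 (t : ℤ) (x : ℤ × ℤ) : r1 t (r1 t x) = x := by
  simp [r1]

def normSt (s t : ℕ) (x : ℤ × ℤ) : ℤ × ℤ :=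
  if 2*(x.1 - x.2) > (s : ℤ) + 1 then normSt s t (r0 s x)
  else if 2*(x.1 - x.2) < -((t : ℤ) + 1) then normSt s t (r1 t x)
  else x
termination_by (2*(2*(x.1 - x.2)) - ((s : ℤ) - t)).natAbs
decreasing_by
  · simp only [r0]
    omega
  · simp only [r1]
    omega

lemma normSt_fix {s t : ℕ} {x : ℤ × ℤ} (h1 : -((t:ℤ)+1) ≤ 2*(x.1 - x.2))
    (h2 : 2*(x.1 - x.2) ≤ (s:ℤ) + 1) : normSt s t x = x := by
  rw [normSt]
  rw [if_neg (by omega), if_neg (by omega)]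

lemma normSt_r0 (s t : ℕ) (x : ℤ × ℤ) : normSt s t (r0 s x) = normSt s t x := by
  rcases lt_trichotomy (2*(x.1 - x.2)) ((s:ℤ)+1) with h | h | h
  · have hE : 2*((r0 s x).1 - (r0 s x).2) = 2*((s:ℤ)+1) - 2*(x.1 - x.2) := by
      simp [r0]; ring
    conv_lhs => rw [normSt]
    rw [if_pos (by omega), r0_r0]
  · have : r0 s x = x := by
      have : x.1 - x.2 = ((s:ℤ)+1)/2 := by omega
      simp [r0, Prod.ext_iff]; omega
    rw [this]
  · conv_rhs => rw [normSt]
    rw [if_pos (by omega)]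

lemma normSt_r1 (s t : ℕ) (x : ℤ × ℤ) : normSt s t (r1 t x) = normSt s t x := by
  rcases lt_trichotomy (2*(x.1 - x.2)) (-((t:ℤ)+1)) with h | h | h
  · conv_rhs => rw [normSt]
    rw [if_neg (by omega), if_pos (by omega)]
  · have : r1 t x = x := by
      simp [r1, Prod.ext_iff]; omega
    rw [this]
  · have hE : 2*((r1 t x).1 - (r1 t x).2) = -2*((t:ℤ)+1) - 2*(x.1 - x.2) := by
      simp [r1]; ring
    conv_lhs => rw [normSt]
    rw [if_neg (by omega), if_pos (by omega), r1_r1]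

lemma normSt_le (s t : ℕ) (x : ℤ × ℤ) :
    (normSt s t x).1 ≤ x.1 ∧ (normSt s t x).2 ≤ x.2 := by
  rw [normSt]
  split_ifs with h1 h2
  · have := normSt_le s t (r0 s x)
    simp only [r0] at this ⊢
    omega
  · have := normSt_le s t (r1 t x)
    simp only [r1] at this ⊢
    omega
  · exact ⟨le_refl _, le_refl _⟩
termination_by (2*(2*(x.1 - x.2)) - ((s : ℤ) - t)).natAbs
decreasing_by
  · simp only [r0]
    omega
  · simp only [r1]
    omega

lemma normSt_alcove (s t : ℕ) (x : ℤ × ℤ) :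
    -((t:ℤ)+1) ≤ 2*((normSt s t x).1 - (normSt s t x).2) ∧
    2*((normSt s t x).1 - (normSt s t x).2) ≤ (s:ℤ) + 1 := by
  rw [normSt]
  split_ifs with h1 h2
  · exact normSt_alcove s t (r0 s x)
  · exact normSt_alcove s t (r1 t x)
  · constructor <;> omega
termination_by (2*(2*(x.1 - x.2)) - ((s : ℤ) - t)).natAbs
decreasing_by
  · simp only [r0]
    omega
  · simp only [r1]
    omega


lemma pWr_swap (f g : ℂ[X]) : pWr f g = -pWr g f := by simp [pWr]; ring

lemma pWr_mul (f g h : ℂ[X]) : pWr (f*g) (f*h) = f^2 * pWr g h := by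
  simp [pWr, derivative_mul]; ring

@[simp] lemma pWr_zero_right (f : ℂ[X]) : pWr f 0 = 0 := by simp [pWr]

lemma pWr_add_C_mul (f g : ℂ[X]) (c : ℂ) : pWr f (g + C c * f) = pWr f g := by
  simp [pWr, derivative_mul]; ring

lemma pWr_sub (f g h : ℂ[X]) : pWr f (g - h) = pWr f g - pWr f h := by
  simp [pWr]; ring

lemma deriv_factor (a : ℂ) (m : ℕ) (u : ℂ[X]) :
    derivative ((X - C a)^m * u) * (X - C a) =
      (X - C a)^m * (C (m:ℂ) * u + (X - C a) * derivative u) := by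
  cases m with
  | zero => simp; ring
  | succ j =>
      rw [derivative_mul, derivative_X_sub_C_pow]
      simp only [Nat.add_sub_cancel]
      push_cast
      ring

lemma pWr_factor (a : ℂ) (m k : ℕ) (u v : ℂ[X]) :
    (X - C a) * pWr ((X - C a)^m * u) ((X - C a)^k * v) =
      (X - C a)^(m+k) *
        ((C (k:ℂ) - C (m:ℂ)) * (u*v) + (X - C a) * (u * derivative v - derivative u * v)) := by
  have h1 := deriv_factor a m u
  have h2 := deriv_factor a k v
  have : (X - C a) * pWr ((X - C a)^m * u) ((X - C a)^k * v) =
      ((X - C a)^m * u) * (derivative ((X - C a)^k * v) * (X - C a))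
      - (derivative ((X - C a)^m * u) * (X - C a)) * ((X - C a)^k * v) := by
    simp [pWr]; ring
  rw [this, h1, h2, pow_add]
  ring

/-- extract the coprime-to-root factor -/
lemma exists_factor (p : ℂ[X]) (hp : p ≠ 0) (a : ℂ) :
    ∃ u : ℂ[X], p = (X - C a)^(rootMultiplicity a p) * u ∧ eval a u ≠ 0 := by
  obtain ⟨u, hu⟩ := pow_rootMultiplicity_dvd p a
  refine ⟨u, hu, fun h => ?_⟩
  have hdvd : (X - C a)^(rootMultiplicity a p + 1) ∣ p := by
    have h1 : (X - C a)^(rootMultiplicity a p) * (X - C a) ∣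
        (X - C a)^(rootMultiplicity a p) * u :=
      mul_dvd_mul_left _ ((dvd_iff_isRoot).mpr h)
    rw [← hu, ← pow_succ] at h1
    exact h1
  have := (le_rootMultiplicity_iff hp).mpr hdvd
  omega

lemma pWr_mult_cases {y W : ℂ[X]} (hy : y ≠ 0) (hW : W ≠ 0) (hR : pWr y W ≠ 0) (a : ℂ) :
    (rootMultiplicity a W = rootMultiplicity a y ∧
      2 * (rootMultiplicity a y : ℤ) ≤ (rootMultiplicity a (pWr y W) : ℤ)) ∨
    (((rootMultiplicity a W : ℤ) = (rootMultiplicity a (pWr y W) : ℤ) + 1 - rootMultiplicity a y)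
      ∧ rootMultiplicity a W ≠ rootMultiplicity a y) := by
  obtain ⟨u, hu, hua⟩ := exists_factor y hy a
  obtain ⟨v, hv, hva⟩ := exists_factor W hW a
  have hXa : (X - C a) ≠ 0 := X_sub_C_ne_zero a
  have lhs_m : rootMultiplicity a ((X - C a) * pWr y W) = 1 + rootMultiplicity a (pWr y W) := by
    rw [rootMultiplicity_mul (mul_ne_zero hXa hR), rootMultiplicity_X_sub_C_self]
  by_cases hkm : rootMultiplicity a W = rootMultiplicity a y
  · left
    refine ⟨hkm, ?_⟩
    rw [hkm] at hv
    have hfac := pWr_factor a (rootMultiplicity a y) (rootMultiplicity a y) u v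
    rw [← hu, ← hv] at hfac
    have hB' : (C ((rootMultiplicity a y : ℕ):ℂ) - C ((rootMultiplicity a y : ℕ):ℂ)) * (u*v) +
        (X - C a) * (u * derivative v - derivative u * v)
        = (X - C a) * (u * derivative v - derivative u * v) := by ring
    rw [hB'] at hfac
    have hD : u * derivative v - derivative u * v ≠ 0 := by
      intro h0
      apply hR
      rw [h0, mul_zero, mul_zero] at hfac
      rcases mul_eq_zero.mp hfac with h | h
      · exact absurd h hXa
      · exact h
    have rhs_m : rootMultiplicity a ((X - C a)^(rootMultiplicity a y + rootMultiplicity a y) *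
        ((X - C a) * (u * derivative v - derivative u * v))) =
        (rootMultiplicity a y + rootMultiplicity a y) +
          (1 + rootMultiplicity a (u * derivative v - derivative u * v)) := by
      rw [rootMultiplicity_mul
          (mul_ne_zero (pow_ne_zero _ hXa) (mul_ne_zero hXa hD)),
        rootMultiplicity_mul (mul_ne_zero hXa hD),
        rootMultiplicity_X_sub_C_self, rootMultiplicity_X_sub_C_pow]
    rw [hfac, rhs_m] at lhs_m
    omega
  · right
    have hfac := pWr_factor a (rootMultiplicity a y) (rootMultiplicity a W) u v
    rw [← hu, ← hv] at hfac
    have hBa : eval a ((C ((rootMultiplicity a W : ℕ):ℂ) - C ((rootMultiplicity a y : ℕ):ℂ)) * (u*v) +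
        (X - C a) * (u * derivative v - derivative u * v)) ≠ 0 := by
      simp only [eval_add, eval_mul, eval_sub, eval_C, eval_X, sub_self, zero_mul, add_zero]
      intro h
      rcases mul_eq_zero.mp h with h | h
      · have : ((rootMultiplicity a W : ℕ) : ℂ) = ((rootMultiplicity a y : ℕ) : ℂ) := by
          linear_combination h
        exact hkm (Nat.cast_injective this)
      · rcases mul_eq_zero.mp h with h | h
        · exact hua h
        · exact hva h
    have hBne : ((C ((rootMultiplicity a W : ℕ):ℂ) - C ((rootMultiplicity a y : ℕ):ℂ)) * (u*v) +
        (X - C a) * (u * derivative v - derivative u * v)) ≠ 0 :=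
      fun h => hBa (by rw [h]; simp)
    have rhs_m : rootMultiplicity a ((X - C a)^(rootMultiplicity a y + rootMultiplicity a W) *
        ((C ((rootMultiplicity a W : ℕ):ℂ) - C ((rootMultiplicity a y : ℕ):ℂ)) * (u*v) +
          (X - C a) * (u * derivative v - derivative u * v))) =
        (rootMultiplicity a y + rootMultiplicity a W) + 0 := by
      rw [rootMultiplicity_mul (mul_ne_zero (pow_ne_zero _ hXa) hBne),
        rootMultiplicity_X_sub_C_pow, rootMultiplicity_eq_zero hBa]
    rw [hfac, rhs_m] at lhs_m
    exact ⟨by omega, hkm⟩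

/-- Wronskian kernel: proportionality -/
lemma eq_C_mul_of_pWr_eq_zero {f g : ℂ[X]} (hf : f ≠ 0) (h : pWr f g = 0) :
    ∃ c : ℂ, g = C c * f := by
  by_cases hg0 : g = 0
  · exact ⟨0, by simp [hg0]⟩
  have H : ∀ n : ℕ, ∀ f g : ℂ[X], natDegree f = n → f ≠ 0 → g ≠ 0 → pWr f g = 0 →
      ∃ c : ℂ, g = C c * f := by
    intro n
    induction n using Nat.strong_induction_on with
    | _ n IH =>
      intro f g hn hf hg h
      by_cases hdf : natDegree f = 0
      · obtain ⟨cf, rfl⟩ := natDegree_eq_zero.mp hdf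
        have hcf : cf ≠ 0 := fun h0 => hf (by simp [h0])
        have h' := h
        simp only [pWr, derivative_C, zero_mul, sub_zero] at h'
        have : derivative g = 0 := by
          rcases mul_eq_zero.mp h' with h0 | h0
          · exact absurd h0 (fun hc => hcf (by simpa using hc))
          · exact h0
        obtain ⟨cg, rfl⟩ := natDegree_eq_zero.mp (natDegree_eq_zero_of_derivative_eq_zero this)
        exact ⟨cg / cf, by rw [← C_mul, div_mul_cancel₀ _ hcf]⟩
      · have hdeg : 0 < degree f := by
          rw [← natDegree_pos_iff_degree_pos]; omega
        obtain ⟨a, ha⟩ := Complex.exists_root hdeg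
        have hm1 : 1 ≤ rootMultiplicity a f := (rootMultiplicity_pos hf).mpr ha
        obtain ⟨u, hu, hua⟩ := exists_factor f hf a
        obtain ⟨v, hv, hva⟩ := exists_factor g hg a
        have hkm : rootMultiplicity a g = rootMultiplicity a f := by
          by_contra hkm
          have hfac := pWr_factor a (rootMultiplicity a f) (rootMultiplicity a g) u v
          rw [← hu, ← hv, h, mul_zero] at hfac
          have hB : ((C ((rootMultiplicity a g : ℕ):ℂ) - C ((rootMultiplicity a f : ℕ):ℂ)) * (u*v) +
              (X - C a) * (u * derivative v - derivative u * v)) = 0 := by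
            rcases mul_eq_zero.mp hfac.symm with h0 | h0
            · exact absurd h0 (pow_ne_zero _ (X_sub_C_ne_zero a))
            · exact h0
          have := congrArg (eval a) hB
          simp only [eval_add, eval_mul, eval_sub, eval_C, eval_X, sub_self, zero_mul, add_zero,
            eval_zero] at this
          rcases mul_eq_zero.mp this with h0 | h0
          · have hcc : ((rootMultiplicity a g : ℕ) : ℂ) = ((rootMultiplicity a f : ℕ) : ℂ) := by
              linear_combination h0
            exact hkm (Nat.cast_injective hcc)
          · rcases mul_eq_zero.mp h0 with h0 | h0
            · exact hua h0
            · exact hva h0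
        rw [hkm] at hv
        rw [hu, hv, pWr_mul] at h
        have hpow : ((X - C a)^(rootMultiplicity a f))^2 ≠ 0 :=
          pow_ne_zero _ (pow_ne_zero _ (X_sub_C_ne_zero a))
        have huv : pWr u v = 0 := by
          rcases mul_eq_zero.mp h with h0 | h0
          · exact absurd h0 hpow
          · exact h0
        have hune : u ≠ 0 := fun h0 => hua (by rw [h0]; simp)
        have hvne : v ≠ 0 := fun h0 => hva (by rw [h0]; simp)
        have hdu : natDegree u < n := by
          have hnd : natDegree f = rootMultiplicity a f + natDegree u := by
            conv_lhs => rw [hu]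
            rw [natDegree_mul (pow_ne_zero _ (X_sub_C_ne_zero a)) hune,
              natDegree_pow, natDegree_X_sub_C, mul_one]
          omega
        obtain ⟨c, hc⟩ := IH (natDegree u) hdu u v rfl hune hvne huv
        refine ⟨c, ?_⟩
        rw [hv, hc]
        conv_rhs => rw [hu]
        ring
  exact H _ f g rfl hf hg0 h


/-! ### chunk 3 -/

open scoped Classical

lemma pWr_C_mul_right (f g : ℂ[X]) (c : ℂ) : pWr f (C c * g) = C c * pWr f g := by
  simp [pWr, derivative_mul]; ring

lemma pWr_C_C (f g : ℂ[X]) (b c : ℂ) : pWr (C b * f) (C c * g) = C (b*c) * pWr f g := by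
  simp [pWr, derivative_mul]; ring

lemma rm_C_mul (a : ℂ) {c : ℂ} (hc : c ≠ 0) (p : ℂ[X]) (hp : p ≠ 0) :
    rootMultiplicity a (C c * p) = rootMultiplicity a p := by
  rw [rootMultiplicity_mul (mul_ne_zero (by simpa using hc) hp),
    rootMultiplicity_eq_zero (by simp [IsRoot, hc]), zero_add]

/-- divisibility from pointwise root multiplicities, over ℂ -/
lemma dvd_of_rm_le {p q : ℂ[X]} (hp : p ≠ 0) (hq : q ≠ 0)
    (h : ∀ a : ℂ, rootMultiplicity a p ≤ rootMultiplicity a q) : p ∣ q := by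
  have H : ∀ n : ℕ, ∀ p q : ℂ[X], natDegree p = n → p ≠ 0 → q ≠ 0 →
      (∀ a : ℂ, rootMultiplicity a p ≤ rootMultiplicity a q) → p ∣ q := by
    intro n
    induction n using Nat.strong_induction_on with
    | _ n IH =>
      intro p q hn hp hq h
      by_cases hdp : natDegree p = 0
      · obtain ⟨c, rfl⟩ := natDegree_eq_zero.mp hdp
        exact (isUnit_C.mpr (isUnit_iff_ne_zero.mpr (fun h0 => hp (by simp [h0])))).dvd
      · have hdeg : 0 < degree p := by rw [← natDegree_pos_iff_degree_pos]; omega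
        obtain ⟨a, ha⟩ := Complex.exists_root hdeg
        have hm1 : 1 ≤ rootMultiplicity a p := (rootMultiplicity_pos hp).mpr ha
        obtain ⟨u, hu, hua⟩ := exists_factor p hp a
        have hq' : (X - C a) ^ rootMultiplicity a p ∣ q :=
          (pow_dvd_pow _ (h a)).trans (pow_rootMultiplicity_dvd q a)
        obtain ⟨v, hv⟩ := hq'
        have hune : u ≠ 0 := fun h0 => hua (by rw [h0]; simp)
        have hvne : v ≠ 0 := fun h0 => hq (by rw [hv, h0, mul_zero])
        have hXa : (X - C a) ≠ 0 := X_sub_C_ne_zero a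
        have hpow : (X - C a) ^ rootMultiplicity a p ≠ 0 := pow_ne_zero _ hXa
        have hrm : ∀ b : ℂ, rootMultiplicity b u ≤ rootMultiplicity b v := by
          intro b
          have h1 : rootMultiplicity b p =
              rootMultiplicity b ((X - C a) ^ rootMultiplicity a p) + rootMultiplicity b u := by
            conv_lhs => rw [hu]
            rw [rootMultiplicity_mul (by rw [← hu]; exact hp)]
          have h2 : rootMultiplicity b q =
              rootMultiplicity b ((X - C a) ^ rootMultiplicity a p) + rootMultiplicity b v := by
            conv_lhs => rw [hv]
            rw [rootMultiplicity_mul (by rw [← hv]; exact hq)]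
          have := h b
          omega
        have hdu : natDegree u < n := by
          have hnd : natDegree p = rootMultiplicity a p + natDegree u := by
            conv_lhs => rw [hu]
            rw [natDegree_mul hpow hune, natDegree_pow, natDegree_X_sub_C, mul_one]
          omega
        obtain ⟨w, hw⟩ := IH (natDegree u) hdu u v rfl hune hvne hrm
        refine ⟨w, ?_⟩
        rw [hv, hw]
        conv_rhs => rw [hu]
        ring
  exact H _ p q rfl hp hq h

lemma monic_eq_of_rm {p q : ℂ[X]} (hp : p.Monic) (hq : q.Monic)
    (h : ∀ a : ℂ, rootMultiplicity a p = rootMultiplicity a q) : p = q := by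
  have h1 : p ∣ q := dvd_of_rm_le hp.ne_zero hq.ne_zero (fun a => (h a).le)
  have h2 : q ∣ p := dvd_of_rm_le hq.ne_zero hp.ne_zero (fun a => (h a).ge)
  exact eq_of_monic_of_associated hp hq (associated_of_dvd_dvd h1 h2)

/-- the state of a pair at a point -/
def st (a : ℂ) (z : ℂ[X] × ℂ[X]) : ℤ × ℤ :=
  ((rootMultiplicity a z.1 : ℤ), (rootMultiplicity a z.2 : ℤ))

def nzp (z : ℂ[X] × ℂ[X]) : Prop := z.1 ≠ 0 ∧ z.2 ≠ 0

/-- order facts about one solution of the direction-0 Wronskian equation -/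
lemma sol_facts {T1 z1 z2 W : ℂ[X]} (hT1 : T1 ≠ 0) (hz1 : z1 ≠ 0) (hz2 : z2 ≠ 0)
    (hW : pWr z1 W = T1 * z2 ^ 2) (a : ℂ) :
    W ≠ 0 ∧
    ((rootMultiplicity a W = rootMultiplicity a z1 ∧
       2 * (rootMultiplicity a z1 : ℤ) ≤
        (rootMultiplicity a T1 : ℤ) + 2 * rootMultiplicity a z2) ∨
     ((rootMultiplicity a W : ℤ) =
        (rootMultiplicity a T1 : ℤ) + 2 * rootMultiplicity a z2 + 1 - rootMultiplicity a z1 ∧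
      rootMultiplicity a W ≠ rootMultiplicity a z1)) := by
  have hR : T1 * z2 ^ 2 ≠ 0 := mul_ne_zero hT1 (pow_ne_zero _ hz2)
  have hWne : W ≠ 0 := by
    intro h0; rw [h0, pWr_zero_right] at hW; exact hR hW.symm
  have hrmR : (rootMultiplicity a (pWr z1 W) : ℤ) =
      (rootMultiplicity a T1 : ℤ) + 2 * rootMultiplicity a z2 := by
    rw [hW, rootMultiplicity_mul hR, sq,
      rootMultiplicity_mul (pow_ne_zero 2 hz2 ∘ (sq z2 ▸ ·))]
    push_cast; ring
  refine ⟨hWne, ?_⟩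
  rcases pWr_mult_cases hz1 hWne (hW ▸ hR) a with ⟨h1, h2⟩ | ⟨h1, h2⟩
  · left; refine ⟨h1, by omega⟩
  · right; refine ⟨by omega, h2⟩

/-- facts forced at every fertile pair -/
lemma fertile_facts {T z : ℂ[X] × ℂ[X]} (hT : nzp T) (hf : Fertile T z) (a : ℂ) :
    ((st a z).1 ≤ (rootMultiplicity a T.1 : ℤ) + 2 * (st a z).2 + 1 ∧
      2 * (st a z).1 ≠ (rootMultiplicity a T.1 : ℤ) + 2 * (st a z).2 + 1) ∧
    ((st a z).2 ≤ (rootMultiplicity a T.2 : ℤ) + 2 * (st a z).1 + 1 ∧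
      2 * (st a z).2 ≠ (rootMultiplicity a T.2 : ℤ) + 2 * (st a z).1 + 1) := by
  obtain ⟨hz1, hz2, ty0, ty1, h0, h1⟩ := hf
  constructor
  · rcases (sol_facts hT.1 hz1 hz2 h0 a).2 with ⟨hc1, hc2⟩ | ⟨hc1, hc2⟩
    · constructor <;> simp only [st] <;> omega
    · have : (0:ℤ) ≤ rootMultiplicity a ty0 := Int.natCast_nonneg _
      constructor <;> simp only [st] <;> omega
  · rcases (sol_facts hT.2 hz2 hz1 h1 a).2 with ⟨hc1, hc2⟩ | ⟨hc1, hc2⟩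
    · constructor <;> simp only [st] <;> omega
    · have : (0:ℤ) ≤ rootMultiplicity a ty1 := Int.natCast_nonneg _
      constructor <;> simp only [st] <;> omega

/-- state transition along one reproduction -/
lemma step_st {T z w : ℂ[X] × ℂ[X]} (hT : nzp T) (hz : nzp z) (hs : Reprod T z w) :
    nzp w ∧ ∀ a : ℂ,
      st a w = st a z ∨ st a w = r0 (rootMultiplicity a T.1) (st a z) ∨
      st a w = r1 (rootMultiplicity a T.2) (st a z) := by
  rcases hs with ⟨h2, h1⟩ | ⟨h2, h1⟩
  · have hfa := fun a => sol_facts hT.1 hz.1 hz.2 h1 a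
    refine ⟨⟨(hfa 0).1, h2 ▸ hz.2⟩, fun a => ?_⟩
    rcases (hfa a).2 with ⟨hc1, _⟩ | ⟨hc1, _⟩
    · left; simp only [st, h2, hc1]
    · right; left
      simp only [st, h2, r0, Prod.ext_iff]
      refine ⟨by omega, by trivial⟩
  · have hfa := fun a => sol_facts hT.2 hz.2 hz.1 h1 a
    refine ⟨⟨h2 ▸ hz.1, (hfa 0).1⟩, fun a => ?_⟩
    rcases (hfa a).2 with ⟨hc1, _⟩ | ⟨hc1, _⟩
    · left; simp only [st, h2, hc1]
    · right; right
      simp only [st, h2, r1, Prod.ext_iff]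
      refine ⟨by trivial, by omega⟩

/-- chain invariant: nonzeroness and the normalized state -/
lemma chain_facts {T z w : ℂ[X] × ℂ[X]} (hT : nzp T) (hz : nzp z)
    (hc : Relation.ReflTransGen (Reprod T) z w) :
    nzp w ∧ ∀ a : ℂ,
      normSt (rootMultiplicity a T.1) (rootMultiplicity a T.2) (st a w) =
      normSt (rootMultiplicity a T.1) (rootMultiplicity a T.2) (st a z) := by
  induction hc with
  | refl => exact ⟨hz, fun _ => rfl⟩
  | tail hc hs IH =>
      obtain ⟨hnz, hst⟩ := step_st hT IH.1 hs
      refine ⟨hnz, fun a => ?_⟩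
      rcases hst a with h | h | h
      · rw [h]; exact IH.2 a
      · rw [h, normSt_r0]; exact IH.2 a
      · rw [h, normSt_r1]; exact IH.2 a


/-! ### chunk 4: lifting, scaling, reversal, transfer, realization -/

lemma sf_tail {T z w : ℂ[X] × ℂ[X]} (hsf : SuperFertile T z)
    (hc : Relation.ReflTransGen (Reprod T) z w) : SuperFertile T w :=
  fun v hv => hsf v (hc.trans hv)

lemma step_lift {T T' : ℂ[X] × ℂ[X]} {f0 f1 : ℂ[X]}
    (hdiv0 : T.1 * f1^2 = f0^2 * T'.1) (hdiv1 : T.2 * f0^2 = f1^2 * T'.2)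
    {u w : ℂ[X] × ℂ[X]} (h : Reprod T' u w) :
    Reprod T (f0*u.1, f1*u.2) (f0*w.1, f1*w.2) := by
  rcases h with ⟨h2, h1⟩ | ⟨h2, h1⟩
  · left
    refine ⟨by simp [h2], ?_⟩
    show pWr (f0*u.1) (f0*w.1) = T.1 * (f1*u.2)^2
    rw [pWr_mul, h1]
    linear_combination (-(u.2^2)) * hdiv0
  · right
    refine ⟨by simp [h2], ?_⟩
    show pWr (f1*u.2) (f1*w.2) = T.2 * (f0*u.1)^2
    rw [pWr_mul, h1]
    linear_combination (-(u.1^2)) * hdiv1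

lemma chain_lift {T T' : ℂ[X] × ℂ[X]} {f0 f1 : ℂ[X]}
    (hdiv0 : T.1 * f1^2 = f0^2 * T'.1) (hdiv1 : T.2 * f0^2 = f1^2 * T'.2)
    {u w : ℂ[X] × ℂ[X]} (h : Relation.ReflTransGen (Reprod T') u w) :
    Relation.ReflTransGen (Reprod T) (f0*u.1, f1*u.2) (f0*w.1, f1*w.2) := by
  induction h with
  | refl => exact Relation.ReflTransGen.refl
  | tail _ hs IH => exact IH.tail (step_lift hdiv0 hdiv1 hs)

lemma step_scale {T : ℂ[X] × ℂ[X]} {e0 e1 : ℂ} (h0 : e0^2 = 1) (h1 : e1^2 = 1)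
    {u w : ℂ[X] × ℂ[X]} (h : Reprod T u w) :
    Reprod T (C e0 * u.1, C e1 * u.2) (C e0 * w.1, C e1 * w.2) := by
  rcases h with ⟨h2, hw⟩ | ⟨h2, hw⟩
  · left
    refine ⟨by simp [h2], ?_⟩
    show pWr (C e0 * u.1) (C e0 * w.1) = T.1 * (C e1 * u.2)^2
    rw [pWr_C_C, hw]
    have he : e0 * e0 = 1 := by rw [← sq]; exact h0
    rw [he, mul_pow, ← C_pow, h1]
    simp
  · right
    refine ⟨by simp [h2], ?_⟩
    show pWr (C e1 * u.2) (C e1 * w.2) = T.2 * (C e0 * u.1)^2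
    rw [pWr_C_C, hw]
    have he : e1 * e1 = 1 := by rw [← sq]; exact h1
    rw [he, mul_pow, ← C_pow, h0]
    simp

lemma chain_scale {T : ℂ[X] × ℂ[X]} {e0 e1 : ℂ} (h0 : e0^2 = 1) (h1 : e1^2 = 1)
    {u w : ℂ[X] × ℂ[X]} (h : Relation.ReflTransGen (Reprod T) u w) :
    Relation.ReflTransGen (Reprod T) (C e0 * u.1, C e1 * u.2) (C e0 * w.1, C e1 * w.2) := by
  induction h with
  | refl => exact Relation.ReflTransGen.refl
  | tail _ hs IH => exact IH.tail (step_scale h0 h1 hs)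

lemma step_reverse {T u w : ℂ[X] × ℂ[X]} (h : Reprod T u w) :
    (Reprod T w (C (-1) * u.1, C 1 * u.2)) ∨ (Reprod T w (C 1 * u.1, C (-1) * u.2)) := by
  rcases h with ⟨h2, hw⟩ | ⟨h2, hw⟩
  · left; left
    constructor
    · show C 1 * u.2 = w.2
      rw [h2]; simp
    · show pWr w.1 (C (-1) * u.1) = T.1 * w.2^2
      rw [pWr_C_mul_right, h2]
      have h3 := pWr_swap u.1 w.1
      rw [hw] at h3
      rw [h3]
      simp
  · right; right
    constructor
    · show C 1 * u.1 = w.1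
      rw [h2]; simp
    · show pWr w.2 (C (-1) * u.2) = T.2 * w.1^2
      rw [pWr_C_mul_right, h2]
      have h3 := pWr_swap u.2 w.2
      rw [hw] at h3
      rw [h3]
      simp

lemma chain_reverse {T u w : ℂ[X] × ℂ[X]} (h : Relation.ReflTransGen (Reprod T) u w) :
    ∃ e0 e1 : ℂ, e0^2 = 1 ∧ e1^2 = 1 ∧
      Relation.ReflTransGen (Reprod T) w (C e0 * u.1, C e1 * u.2) := by
  induction h with
  | refl =>
      refine ⟨1, 1, by norm_num, by norm_num, ?_⟩
      have h1 : (C (1:ℂ) * u.1, C (1:ℂ) * u.2) = u := by simp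
      rw [h1]
  | @tail z z' hc hs IH =>
      obtain ⟨e0, e1, he0, he1, hchain⟩ := IH
      have key : ∀ a b : ℂ, a^2 = 1 → b^2 = 1 → Reprod T z' (C a * z.1, C b * z.2) →
          ∃ e0' e1' : ℂ, e0'^2 = 1 ∧ e1'^2 = 1 ∧
            Relation.ReflTransGen (Reprod T) z' (C e0' * u.1, C e1' * u.2) := by
        intro a b ha hb hrev
        refine ⟨a*e0, b*e1, by rw [mul_pow, ha, he0, one_mul],
          by rw [mul_pow, hb, he1, one_mul], ?_⟩
        have hsc := chain_scale (T := T) ha hb hchain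
        have hidem : (C a * (C e0 * u.1), C b * (C e1 * u.2)) =
            (C (a*e0) * u.1, C (b*e1) * u.2) := by
          simp [C_mul, mul_assoc]
        rw [hidem] at hsc
        exact (Relation.ReflTransGen.single hrev).trans hsc
      rcases step_reverse hs with hrev | hrev
      · exact key (-1) 1 (by norm_num) (by norm_num) hrev
      · exact key 1 (-1) (by norm_num) (by norm_num) hrev


/-! ### chunk 5: translation, realization, transfer -/

lemma norm_translate (s' t' : ℕ) (P Q : ℤ) (s t : ℕ)
    (hs : (s:ℤ) = s' + 2*P - 2*Q) (ht : (t:ℤ) = t' + 2*Q - 2*P) (x : ℤ × ℤ) :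
    normSt s t (x.1 + P, x.2 + Q) = ((normSt s' t' x).1 + P, (normSt s' t' x).2 + Q) := by
  have H : ∀ n : ℕ, ∀ x : ℤ × ℤ, (2*(2*(x.1 - x.2)) - ((s':ℤ) - t')).natAbs = n →
      normSt s t (x.1 + P, x.2 + Q) = ((normSt s' t' x).1 + P, (normSt s' t' x).2 + Q) := by
    intro n
    induction n using Nat.strong_induction_on with
    | _ n IH =>
      intro x hn
      by_cases h1 : 2*(x.1 - x.2) > (s':ℤ) + 1
      · have e1 : normSt s' t' x = normSt s' t' (r0 s' x) := (normSt_r0 s' t' x).symm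
        have e2 : normSt s t (x.1 + P, x.2 + Q) = normSt s t (r0 s (x.1 + P, x.2 + Q)) :=
          (normSt_r0 s t _).symm
        have e3 : r0 s (x.1 + P, x.2 + Q) = ((r0 s' x).1 + P, (r0 s' x).2 + Q) := by
          simp only [r0, Prod.ext_iff]
          exact ⟨by omega, by trivial⟩
        rw [e1, e2, e3]
        exact IH _ (by simp only [r0]; omega) (r0 s' x) rfl
      · by_cases h2 : 2*(x.1 - x.2) < -((t':ℤ) + 1)
        · have e1 : normSt s' t' x = normSt s' t' (r1 t' x) := (normSt_r1 s' t' x).symm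
          have e2 : normSt s t (x.1 + P, x.2 + Q) = normSt s t (r1 t (x.1 + P, x.2 + Q)) :=
            (normSt_r1 s t _).symm
          have e3 : r1 t (x.1 + P, x.2 + Q) = ((r1 t' x).1 + P, (r1 t' x).2 + Q) := by
            simp only [r1, Prod.ext_iff]
            exact ⟨by trivial, by omega⟩
          rw [e1, e2, e3]
          exact IH _ (by simp only [r1]; omega) (r1 t' x) rfl
        · rw [normSt_fix (x := x) (by omega) (by omega),
            normSt_fix (x := (x.1 + P, x.2 + Q)) (by simp; omega) (by simp; omega)]
  exact H _ x rfl

lemma realize {T : ℂ[X] × ℂ[X]} (hT : nzp T) {z : ℂ[X] × ℂ[X]} (hz : nzp z)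
    (hsf : SuperFertile T z) (a : ℂ) :
    ∃ w, Relation.ReflTransGen (Reprod T) z w ∧
      st a w = normSt (rootMultiplicity a T.1) (rootMultiplicity a T.2) (st a z) := by
  set s := rootMultiplicity a T.1 with hsdef
  set t := rootMultiplicity a T.2 with htdef
  have H : ∀ n : ℕ, ∀ z : ℂ[X] × ℂ[X], nzp z → SuperFertile T z →
      (2*(2*((st a z).1 - (st a z).2)) - ((s:ℤ) - t)).natAbs = n →
      ∃ w, Relation.ReflTransGen (Reprod T) z w ∧ st a w = normSt s t (st a z) := by
    intro n
    induction n using Nat.strong_induction_on with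
    | _ n IH =>
      intro z hz hsf hn
      by_cases h1 : 2*((st a z).1 - (st a z).2) > (s:ℤ) + 1
      · obtain ⟨hz1, hz2, ty0, ty1, h0, _⟩ := hsf z Relation.ReflTransGen.refl
        set w1 : ℂ[X] × ℂ[X] := (ty0, z.2) with hw1def
        have hstep : Reprod T z w1 := Or.inl ⟨rfl, h0⟩
        have hw1st : st a w1 = r0 s (st a z) := by
          rcases (sol_facts hT.1 hz1 hz2 h0 a).2 with ⟨hc1, hc2⟩ | ⟨hc1, hc2⟩
          · exfalso
            simp only [st] at h1
            omega
          · rw [hw1def]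
            simp only [st, r0, Prod.mk.injEq]
            exact ⟨hc1, trivial⟩
        have hnz1 : nzp w1 := ⟨(sol_facts hT.1 hz1 hz2 h0 a).1, hz2⟩
        have hsf1 : SuperFertile T w1 := sf_tail hsf (Relation.ReflTransGen.single hstep)
        obtain ⟨w, hwc, hwst⟩ := IH _
          (by rw [hw1st]; simp only [r0]; simp only [st] at h1 hn ⊢; omega)
          w1 hnz1 hsf1 rfl
        refine ⟨w, (Relation.ReflTransGen.single hstep).trans hwc, ?_⟩
        rw [hwst, hw1st, normSt_r0]
      · by_cases h2 : 2*((st a z).1 - (st a z).2) < -((t:ℤ) + 1)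
        · obtain ⟨hz1, hz2, ty0, ty1, _, h0⟩ := hsf z Relation.ReflTransGen.refl
          set w1 : ℂ[X] × ℂ[X] := (z.1, ty1) with hw1def
          have hstep : Reprod T z w1 := Or.inr ⟨rfl, h0⟩
          have hw1st : st a w1 = r1 t (st a z) := by
            rcases (sol_facts hT.2 hz2 hz1 h0 a).2 with ⟨hc1, hc2⟩ | ⟨hc1, hc2⟩
            · exfalso
              simp only [st] at h2
              omega
            · rw [hw1def]
              simp only [st, r1, Prod.mk.injEq]
              exact ⟨trivial, hc1⟩
          have hnz1 : nzp w1 := ⟨hz1, (sol_facts hT.2 hz2 hz1 h0 a).1⟩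
          have hsf1 : SuperFertile T w1 := sf_tail hsf (Relation.ReflTransGen.single hstep)
          obtain ⟨w, hwc, hwst⟩ :=
            IH _ (by rw [hw1st]; simp only [r1]; simp only [st] at h2 hn ⊢; omega)
            w1 hnz1 hsf1 rfl
          refine ⟨w, (Relation.ReflTransGen.single hstep).trans hwc, ?_⟩
          rw [hwst, hw1st, normSt_r1]
        · exact ⟨z, Relation.ReflTransGen.refl, (normSt_fix (by omega) (by omega)).symm⟩
  exact H _ z hz hsf rfl

lemma norm_facts {T : ℂ[X] × ℂ[X]} (hT : nzp T) {z : ℂ[X] × ℂ[X]} (hz : nzp z)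
    (hsf : SuperFertile T z) (a : ℂ) :
    0 ≤ (normSt (rootMultiplicity a T.1) (rootMultiplicity a T.2) (st a z)).1 ∧
    0 ≤ (normSt (rootMultiplicity a T.1) (rootMultiplicity a T.2) (st a z)).2 ∧
    -((rootMultiplicity a T.2 : ℤ)) ≤
      2*((normSt (rootMultiplicity a T.1) (rootMultiplicity a T.2) (st a z)).1 -
        (normSt (rootMultiplicity a T.1) (rootMultiplicity a T.2) (st a z)).2) ∧
    2*((normSt (rootMultiplicity a T.1) (rootMultiplicity a T.2) (st a z)).1 -
        (normSt (rootMultiplicity a T.1) (rootMultiplicity a T.2) (st a z)).2) ≤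
      (rootMultiplicity a T.1 : ℤ) := by
  obtain ⟨w, hc, hw⟩ := realize hT hz hsf a
  have hfw := fertile_facts hT (hsf w hc) a
  have halc := normSt_alcove (rootMultiplicity a T.1) (rootMultiplicity a T.2) (st a z)
  rw [← hw] at halc ⊢
  have h1 : 0 ≤ (st a w).1 := Int.natCast_nonneg _
  have h2 : 0 ≤ (st a w).2 := Int.natCast_nonneg _
  refine ⟨h1, h2, ?_, ?_⟩ <;> omega

lemma sf_reduce {T T' : ℂ[X] × ℂ[X]} {f0 f1 : ℂ[X]} (hT : nzp T) (hT' : nzp T')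
    (hf0 : f0 ≠ 0) (hf1 : f1 ≠ 0)
    (hdiv0 : T.1 * f1^2 = f0^2 * T'.1) (hdiv1 : T.2 * f0^2 = f1^2 * T'.2)
    {y : ℂ[X] × ℂ[X]} (hy : nzp y)
    (hsf : SuperFertile T (f0*y.1, f1*y.2))
    (hnrm : ∀ a : ℂ, normSt (rootMultiplicity a T'.1) (rootMultiplicity a T'.2) (st a y)
      = (0,0)) :
    SuperFertile T' y := by
  intro z hc
  obtain ⟨hznz, hznorm⟩ := chain_facts hT' hy hc
  have hcl := chain_lift hdiv0 hdiv1 hc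
  obtain ⟨hZ1, hZ2, W0, W1, h0, h1⟩ := hsf _ hcl
  dsimp only at hZ1 hZ2 h0 h1
  have hrmT : ∀ a : ℂ, (rootMultiplicity a T.1 : ℤ) + 2*(rootMultiplicity a f1) =
      2*(rootMultiplicity a f0) + rootMultiplicity a T'.1 := by
    intro a
    have hL : T.1 * f1^2 ≠ 0 := by
      rw [hdiv0]; exact mul_ne_zero (pow_ne_zero _ hf0) hT'.1
    have e1 := rootMultiplicity_mul (x := a) hL
    have e2 := rootMultiplicity_mul (x := a) (hdiv0 ▸ hL)
    rw [hdiv0] at e1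
    rw [e2] at e1
    have e3 : rootMultiplicity a (f1^2) = 2 * rootMultiplicity a f1 := by
      rw [sq, rootMultiplicity_mul (mul_ne_zero hf1 hf1)]; ring
    have e4 : rootMultiplicity a (f0^2) = 2 * rootMultiplicity a f0 := by
      rw [sq, rootMultiplicity_mul (mul_ne_zero hf0 hf0)]; ring
    rw [e3, e4] at e1
    push_cast
    omega
  have hrmT2 : ∀ a : ℂ, (rootMultiplicity a T.2 : ℤ) + 2*(rootMultiplicity a f0) =
      2*(rootMultiplicity a f1) + rootMultiplicity a T'.2 := by
    intro a
    have hL : T.2 * f0^2 ≠ 0 := by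
      rw [hdiv1]; exact mul_ne_zero (pow_ne_zero _ hf1) hT'.2
    have e1 := rootMultiplicity_mul (x := a) hL
    have e2 := rootMultiplicity_mul (x := a) (hdiv1 ▸ hL)
    rw [hdiv1] at e1
    rw [e2] at e1
    have e3 : rootMultiplicity a (f1^2) = 2 * rootMultiplicity a f1 := by
      rw [sq, rootMultiplicity_mul (mul_ne_zero hf1 hf1)]; ring
    have e4 : rootMultiplicity a (f0^2) = 2 * rootMultiplicity a f0 := by
      rw [sq, rootMultiplicity_mul (mul_ne_zero hf0 hf0)]; ring
    rw [e3, e4] at e1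
    push_cast
    omega
  have refl_nonneg0 : ∀ a : ℂ, 0 ≤ (rootMultiplicity a T'.1 : ℤ) + 2*(st a z).2 + 1
      - (st a z).1 := by
    intro a
    have hkey : normSt (rootMultiplicity a T'.1) (rootMultiplicity a T'.2)
        (r0 (rootMultiplicity a T'.1) (st a z)) = (0,0) := by
      rw [normSt_r0]; rw [hznorm a]; exact hnrm a
    have hle := normSt_le (rootMultiplicity a T'.1) (rootMultiplicity a T'.2)
      (r0 (rootMultiplicity a T'.1) (st a z))
    rw [hkey] at hle
    simp only [r0] at hle
    omega
  have refl_nonneg1 : ∀ a : ℂ, 0 ≤ (rootMultiplicity a T'.2 : ℤ) + 2*(st a z).1 + 1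
      - (st a z).2 := by
    intro a
    have hkey : normSt (rootMultiplicity a T'.1) (rootMultiplicity a T'.2)
        (r1 (rootMultiplicity a T'.2) (st a z)) = (0,0) := by
      rw [normSt_r1]; rw [hznorm a]; exact hnrm a
    have hle := normSt_le (rootMultiplicity a T'.1) (rootMultiplicity a T'.2)
      (r1 (rootMultiplicity a T'.2) (st a z))
    rw [hkey] at hle
    simp only [r1] at hle
    omega
  have hz1 : z.1 ≠ 0 := hznz.1
  have hz2 : z.2 ≠ 0 := hznz.2
  -- divide W0 by f0
  have hW0 := fun a => sol_facts hT.1 hZ1 hZ2 h0 a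
  have hW0ne : W0 ≠ 0 := (hW0 0).1
  have key0 : ∀ a : ℂ, rootMultiplicity a f0 ≤ rootMultiplicity a W0 := by
    intro a
    have em : rootMultiplicity a (f0*z.1) = rootMultiplicity a f0 + rootMultiplicity a z.1 :=
      rootMultiplicity_mul (mul_ne_zero hf0 hz1)
    have en : rootMultiplicity a (f1*z.2) = rootMultiplicity a f1 + rootMultiplicity a z.2 :=
      rootMultiplicity_mul (mul_ne_zero hf1 hz2)
    rcases (hW0 a).2 with ⟨hc1, _⟩ | ⟨hc1, _⟩
    · rw [em] at hc1
      omega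
    · rw [em, en] at hc1
      have hrn := refl_nonneg0 a
      have ht3 := hrmT a
      simp only [st] at hrn
      push_cast at hc1
      omega
  obtain ⟨w0, hw0⟩ := dvd_of_rm_le hf0 hW0ne key0
  -- divide W1 by f1
  have hW1 := fun a => sol_facts hT.2 hZ2 hZ1 h1 a
  have hW1ne : W1 ≠ 0 := (hW1 0).1
  have key1 : ∀ a : ℂ, rootMultiplicity a f1 ≤ rootMultiplicity a W1 := by
    intro a
    have em : rootMultiplicity a (f0*z.1) = rootMultiplicity a f0 + rootMultiplicity a z.1 :=
      rootMultiplicity_mul (mul_ne_zero hf0 hz1)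
    have en : rootMultiplicity a (f1*z.2) = rootMultiplicity a f1 + rootMultiplicity a z.2 :=
      rootMultiplicity_mul (mul_ne_zero hf1 hz2)
    rcases (hW1 a).2 with ⟨hc1, _⟩ | ⟨hc1, _⟩
    · rw [en] at hc1
      omega
    · rw [em, en] at hc1
      have hrn := refl_nonneg1 a
      have ht3 := hrmT2 a
      simp only [st] at hrn
      push_cast at hc1
      omega
  obtain ⟨w1, hw1⟩ := dvd_of_rm_le hf1 hW1ne key1
  refine ⟨hz1, hz2, w0, w1, ?_, ?_⟩
  · have hcan : f0^2 * pWr z.1 w0 = f0^2 * (T'.1 * z.2^2) := by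
      rw [← pWr_mul]
      rw [← hw0]
      show pWr (f0*z.1) W0 = f0^2 * (T'.1 * z.2^2)
      rw [h0]
      show T.1 * (f1*z.2)^2 = _
      linear_combination (z.2^2) * hdiv0
    exact mul_left_cancel₀ (pow_ne_zero 2 hf0) hcan
  · have hcan : f1^2 * pWr z.2 w1 = f1^2 * (T'.2 * z.1^2) := by
      rw [← pWr_mul]
      rw [← hw1]
      show pWr (f1*z.2) W1 = f1^2 * (T'.2 * z.1^2)
      rw [h1]
      show T.2 * (f0*z.1)^2 = _
      linear_combination (z.1^2) * hdiv1
    exact mul_left_cancel₀ (pow_ne_zero 2 hf1) hcan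


/-! ### chunk 6: pencil and descent -/

def genStAt (T' : ℂ[X] × ℂ[X]) (a : ℂ) (z : ℂ[X] × ℂ[X]) : Prop :=
  st a z = (0,0) ∨ (st a z = (1,0) ∧ rootMultiplicity a T'.1 = 0) ∨
    (st a z = (0,1) ∧ rootMultiplicity a T'.2 = 0)

lemma pencil_bad {z1 W0 : ℂ[X]} (hz1 : z1 ≠ 0) (b : ℂ) {c1 c2 : ℂ} (hc : c1 ≠ c2)
    (h1 : rootMultiplicity b z1 < rootMultiplicity b (W0 + C c1 * z1))
    (h2 : rootMultiplicity b z1 < rootMultiplicity b (W0 + C c2 * z1)) : False := by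
  have d1 : (X - C b)^(rootMultiplicity b z1 + 1) ∣ (W0 + C c1 * z1) := by
    by_cases h : W0 + C c1 * z1 = 0
    · rw [h]; exact dvd_zero _
    · exact (le_rootMultiplicity_iff h).mp h1
  have d2 : (X - C b)^(rootMultiplicity b z1 + 1) ∣ (W0 + C c2 * z1) := by
    by_cases h : W0 + C c2 * z1 = 0
    · rw [h]; exact dvd_zero _
    · exact (le_rootMultiplicity_iff h).mp h2
  have d3 : (X - C b)^(rootMultiplicity b z1 + 1) ∣ C (c1 - c2) * z1 := by
    have : C (c1 - c2) * z1 = (W0 + C c1 * z1) - (W0 + C c2 * z1) := by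
      rw [C_sub]; ring
    rw [this]
    exact dvd_sub d1 d2
  have hne : C (c1 - c2) * z1 ≠ 0 :=
    mul_ne_zero (C_ne_zero.mpr (sub_ne_zero_of_ne hc)) hz1
  have := (le_rootMultiplicity_iff hne).mpr d3
  rw [rm_C_mul b (sub_ne_zero_of_ne hc) z1 hz1] at this
  omega

lemma pencil_choice {z1 W0 : ℂ[X]} (hz1 : z1 ≠ 0) (S : Finset ℂ) :
    ∃ c : ℂ, ∀ b ∈ S, rootMultiplicity b (W0 + C c * z1) ≤ rootMultiplicity b z1 := by
  classical
  set g : ℂ → ℂ := fun b =>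
    if h : ∃ c, rootMultiplicity b z1 < rootMultiplicity b (W0 + C c * z1) then h.choose
    else 0 with hg
  obtain ⟨c, hc⟩ := Infinite.exists_notMem_finset (S.image g)
  refine ⟨c, fun b hb => ?_⟩
  by_contra hbad
  push_neg at hbad
  have hex : ∃ c, rootMultiplicity b z1 < rootMultiplicity b (W0 + C c * z1) := ⟨c, hbad⟩
  have hcg : c = g b := by
    rw [hg]
    simp only [hex, dif_pos]
    by_contra hne
    exact pencil_bad hz1 b hne hbad hex.choose_spec
  exact hc (Finset.mem_image.mpr ⟨b, hb, hcg.symm⟩)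

def wgt (T' z : ℂ[X] × ℂ[X]) (a : ℂ) : ℕ :=
  if genStAt T' a z then 0 else rootMultiplicity a z.1 + rootMultiplicity a z.2

def meas (T' z : ℂ[X] × ℂ[X]) : ℕ :=
  ∑ a ∈ (z.1 * z.2 * T'.1 * T'.2).roots.toFinset, wgt T' z a

lemma wgt_eq_zero_off {T' z : ℂ[X] × ℂ[X]} (hT' : nzp T') (hz : nzp z) {a : ℂ}
    (ha : a ∉ (z.1 * z.2 * T'.1 * T'.2).roots.toFinset) : wgt T' z a = 0 := by
  have hprod : z.1 * z.2 * T'.1 * T'.2 ≠ 0 :=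
    mul_ne_zero (mul_ne_zero (mul_ne_zero hz.1 hz.2) hT'.1) hT'.2
  have hnr : ¬(z.1 * z.2 * T'.1 * T'.2).IsRoot a := by
    intro h
    exact ha (Multiset.mem_toFinset.mpr ((mem_roots hprod).mpr h))
  simp only [IsRoot, eval_mul] at hnr
  have h1 : rootMultiplicity a z.1 = 0 :=
    rootMultiplicity_eq_zero (fun h => hnr (by simp [IsRoot.def.mp h]))
  have h2 : rootMultiplicity a z.2 = 0 :=
    rootMultiplicity_eq_zero (fun h => hnr (by simp [IsRoot.def.mp h]))
  have : genStAt T' a z := Or.inl (by simp [st, h1, h2])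
  simp [wgt, this]

lemma meas_eq_sum_superset {T' z : ℂ[X] × ℂ[X]} (hT' : nzp T') (hz : nzp z) {U : Finset ℂ}
    (hU : (z.1 * z.2 * T'.1 * T'.2).roots.toFinset ⊆ U) :
    meas T' z = ∑ a ∈ U, wgt T' z a := by
  rw [meas]
  exact Finset.sum_subset hU (fun x _ hx => wgt_eq_zero_off hT' hz hx)

lemma mem_prot_of_rm_pos {T' z : ℂ[X] × ℂ[X]} (hT' : nzp T') (hz : nzp z) {a : ℂ}
    (h : 0 < rootMultiplicity a z.1 ∨ 0 < rootMultiplicity a z.2 ∨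
      0 < rootMultiplicity a T'.1 ∨ 0 < rootMultiplicity a T'.2) :
    a ∈ (z.1 * z.2 * T'.1 * T'.2).roots.toFinset := by
  have hprod : z.1 * z.2 * T'.1 * T'.2 ≠ 0 :=
    mul_ne_zero (mul_ne_zero (mul_ne_zero hz.1 hz.2) hT'.1) hT'.2
  refine Multiset.mem_toFinset.mpr ((mem_roots hprod).mpr ?_)
  have : IsRoot z.1 a ∨ IsRoot z.2 a ∨ IsRoot T'.1 a ∨ IsRoot T'.2 a := by
    rcases h with h | h | h | h
    · exact Or.inl ((rootMultiplicity_pos hz.1).mp h)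
    · exact Or.inr (Or.inl ((rootMultiplicity_pos hz.2).mp h))
    · exact Or.inr (Or.inr (Or.inl ((rootMultiplicity_pos hT'.1).mp h)))
    · exact Or.inr (Or.inr (Or.inr ((rootMultiplicity_pos hT'.2).mp h)))
  simp only [IsRoot, eval_mul] at this ⊢
  rcases this with h | h | h | h <;> rw [h] <;> ring

lemma descend {T' : ℂ[X] × ℂ[X]} (hT' : nzp T') (z : ℂ[X] × ℂ[X]) (hz : nzp z)
    (hsf : SuperFertile T' z)
    (hnrm : ∀ a : ℂ, normSt (rootMultiplicity a T'.1) (rootMultiplicity a T'.2) (st a z)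
      = (0,0)) :
    ∃ w, Relation.ReflTransGen (Reprod T') z w ∧ nzp w ∧ (∀ a, genStAt T' a w) := by
  have H : ∀ N : ℕ, ∀ z : ℂ[X] × ℂ[X], nzp z → SuperFertile T' z →
      (∀ a : ℂ, normSt (rootMultiplicity a T'.1) (rootMultiplicity a T'.2) (st a z) = (0,0)) →
      meas T' z = N →
      ∃ w, Relation.ReflTransGen (Reprod T') z w ∧ nzp w ∧ (∀ a, genStAt T' a w) := by
    intro N
    induction N using Nat.strong_induction_on with
    | _ N IH =>
      intro z hz hsf hnrm hN
      by_cases hgen : ∀ a, genStAt T' a z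
      · exact ⟨z, Relation.ReflTransGen.refl, hz, hgen⟩
      · push_neg at hgen
        obtain ⟨a0, ha0⟩ := hgen
        -- the state at a0 is not in the closed alcove
        have halc : ¬(-((rootMultiplicity a0 T'.2 : ℤ)+1) ≤ 2*((st a0 z).1 - (st a0 z).2) ∧
            2*((st a0 z).1 - (st a0 z).2) ≤ (rootMultiplicity a0 T'.1 : ℤ) + 1) := by
          rintro ⟨hl, hr⟩
          have hfx := normSt_fix hl hr
          have h00 := hnrm a0
          rw [hfx] at h00
          exact ha0 (Or.inl h00)
        push_neg at halc
        rcases lt_or_ge ((rootMultiplicity a0 T'.1 : ℤ) + 1) (2*((st a0 z).1 - (st a0 z).2))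
          with hdir | hdir
        · -- direction 0
          obtain ⟨hz1, hz2, W0', ty1, h0, _⟩ := hsf z Relation.ReflTransGen.refl
          obtain ⟨c, hcmin⟩ := pencil_choice (W0 := W0') hz1
            ((z.1 * z.2 * T'.1 * T'.2).roots.toFinset)
          set W : ℂ[X] := W0' + C c * z.1 with hWdef
          have hWsol : pWr z.1 W = T'.1 * z.2^2 := by rw [hWdef, pWr_add_C_mul, h0]
          set w1 : ℂ[X] × ℂ[X] := (W, z.2) with hw1def
          have hstep : Reprod T' z w1 := Or.inl ⟨rfl, hWsol⟩
          obtain ⟨hnz1, hst1⟩ := step_st hT' hz (hstep)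
          have hsolf := fun a => sol_facts hT'.1 hz1 hz2 hWsol a
          -- new states never increase first coordinate at protected points
          have hprot : ∀ b ∈ (z.1 * z.2 * T'.1 * T'.2).roots.toFinset,
              rootMultiplicity b W ≤ rootMultiplicity b z.1 := hcmin
          -- strict decrease at a0
          have ha0m : (st a0 w1).1 < (st a0 z).1 ∧ (st a0 w1).2 = (st a0 z).2 := by
            rcases (hsolf a0).2 with ⟨hc1, hc2⟩ | ⟨hc1, hc2⟩
            · exfalso
              simp only [st] at hdir
              omega
            · constructor
              · simp only [hw1def, st] at *
                omega
              · simp only [hw1def, st]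
          -- measure decreases
          have hwgt : ∀ b : ℂ, wgt T' w1 b ≤ wgt T' z b := by
            intro b
            by_cases hbP : b ∈ (z.1 * z.2 * T'.1 * T'.2).roots.toFinset
            · have hble := hprot b hbP
              by_cases hg : genStAt T' b z
              · have hg' : genStAt T' b w1 := by
                  rcases hg with hg | ⟨hg, hs⟩ | ⟨hg, ht⟩
                  · left
                    have h1 : (st b z).1 = 0 := by rw [hg]
                    have h2 : (st b z).2 = 0 := by rw [hg]
                    simp only [st, hw1def, Prod.mk.injEq] at h1 h2 ⊢
                    omega
                  · have h1 : (st b z).1 = 1 := by rw [hg]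
                    have h2 : (st b z).2 = 0 := by rw [hg]
                    simp only [st, hw1def, Prod.mk.injEq] at h1 h2
                    have : rootMultiplicity b W ≤ 1 := by omega
                    interval_cases hrw : rootMultiplicity b W
                    · left; simp only [st, hw1def, Prod.mk.injEq]
                      exact ⟨by rw [hrw]; simp, by omega⟩
                    · right; left
                      refine ⟨?_, hs⟩
                      simp only [st, hw1def, Prod.mk.injEq]
                      exact ⟨by rw [hrw]; simp, by omega⟩
                  · have h1 : (st b z).1 = 0 := by rw [hg]
                    have h2 : (st b z).2 = 1 := by rw [hg]
                    simp only [st, hw1def, Prod.mk.injEq] at h1 h2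
                    right; right
                    refine ⟨?_, ht⟩
                    simp only [st, hw1def, Prod.mk.injEq]
                    exact ⟨by omega, by omega⟩
                simp [wgt, hg, hg']
              · simp only [wgt, if_neg hg]
                split_ifs with h
                · exact Nat.zero_le _
                · try simp only [hw1def]
                  omega
            · -- unprotected: multiplicities were zero, stay generic
              have hoff : rootMultiplicity b z.1 = 0 ∧ rootMultiplicity b z.2 = 0 ∧
                  rootMultiplicity b T'.1 = 0 ∧ rootMultiplicity b T'.2 = 0 := by
                by_contra hcon
                push_neg at hcon
                apply hbP
                apply mem_prot_of_rm_pos hT' hz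
                omega
              have hg' : genStAt T' b w1 := by
                rcases hst1 b with h | h | h
                · left
                  rw [h]
                  simp only [st, Prod.mk.injEq]
                  exact ⟨by simp [hoff.1], by simp [hoff.2.1]⟩
                · right; left
                  refine ⟨?_, hoff.2.2.1⟩
                  rw [h]
                  simp only [st, r0, hoff.1, hoff.2.1, hoff.2.2.1, Prod.mk.injEq]
                  norm_num
                · right; right
                  refine ⟨?_, hoff.2.2.2⟩
                  rw [h]
                  simp only [st, r1, hoff.1, hoff.2.1, hoff.2.2.2, Prod.mk.injEq]
                  norm_num
              simp [wgt, hg']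
          have ha0P : a0 ∈ (z.1 * z.2 * T'.1 * T'.2).roots.toFinset := by
            apply mem_prot_of_rm_pos hT' hz
            left
            have := ha0m.1
            have h0le : (0:ℤ) ≤ (st a0 w1).1 := Int.natCast_nonneg _
            simp only [st] at this h0le ⊢
            omega
          have hstrict : wgt T' w1 a0 < wgt T' z a0 := by
            simp only [wgt, if_neg ha0]
            have hm := ha0m
            split_ifs with h
            · simp only [st] at hm
              omega
            · simp only [st] at hm
              omega
          have hmeas : meas T' w1 < meas T' z := by
            set U := (z.1 * z.2 * T'.1 * T'.2).roots.toFinset ∪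
              (w1.1 * w1.2 * T'.1 * T'.2).roots.toFinset with hU
            rw [meas_eq_sum_superset hT' hz (Finset.subset_union_left),
              meas_eq_sum_superset hT' hnz1 (Finset.subset_union_right)]
            apply Finset.sum_lt_sum (fun b _ => hwgt b)
            exact ⟨a0, Finset.mem_union_left _ ha0P, hstrict⟩
          have hnrm1 : ∀ a : ℂ, normSt (rootMultiplicity a T'.1) (rootMultiplicity a T'.2)
              (st a w1) = (0,0) := by
            intro a
            rcases hst1 a with h | h | h
            · rw [h]; exact hnrm a
            · rw [h, normSt_r0]; exact hnrm a
            · rw [h, normSt_r1]; exact hnrm a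
          obtain ⟨w, hwc, hwz, hwgen⟩ := IH (meas T' w1) (hN ▸ hmeas) w1 hnz1
            (sf_tail hsf (Relation.ReflTransGen.single hstep)) hnrm1 rfl
          exact ⟨w, (Relation.ReflTransGen.single hstep).trans hwc, hwz, hwgen⟩
        · -- direction 1
          have hdir1 : 2*((st a0 z).1 - (st a0 z).2) < -((rootMultiplicity a0 T'.2 : ℤ)+1) := by
            by_contra hcon
            push_neg at hcon
            exact absurd (halc hcon) (by omega)
          obtain ⟨hz1, hz2, ty0, W0', _, h0⟩ := hsf z Relation.ReflTransGen.refl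
          obtain ⟨c, hcmin⟩ := pencil_choice (W0 := W0') hz2
            ((z.1 * z.2 * T'.1 * T'.2).roots.toFinset)
          set W : ℂ[X] := W0' + C c * z.2 with hWdef
          have hWsol : pWr z.2 W = T'.2 * z.1^2 := by rw [hWdef, pWr_add_C_mul, h0]
          set w1 : ℂ[X] × ℂ[X] := (z.1, W) with hw1def
          have hstep : Reprod T' z w1 := Or.inr ⟨rfl, hWsol⟩
          obtain ⟨hnz1, hst1⟩ := step_st hT' hz (hstep)
          have hsolf := fun a => sol_facts hT'.2 hz2 hz1 hWsol a
          have hprot : ∀ b ∈ (z.1 * z.2 * T'.1 * T'.2).roots.toFinset,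
              rootMultiplicity b W ≤ rootMultiplicity b z.2 := hcmin
          have ha0m : (st a0 w1).2 < (st a0 z).2 ∧ (st a0 w1).1 = (st a0 z).1 := by
            rcases (hsolf a0).2 with ⟨hc1, hc2⟩ | ⟨hc1, hc2⟩
            · exfalso
              simp only [st] at hdir1
              omega
            · constructor
              · simp only [hw1def, st] at *
                omega
              · simp only [hw1def, st]
          have hwgt : ∀ b : ℂ, wgt T' w1 b ≤ wgt T' z b := by
            intro b
            by_cases hbP : b ∈ (z.1 * z.2 * T'.1 * T'.2).roots.toFinset
            · have hble := hprot b hbP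
              by_cases hg : genStAt T' b z
              · have hg' : genStAt T' b w1 := by
                  rcases hg with hg | ⟨hg, hs⟩ | ⟨hg, ht⟩
                  · left
                    have h1 : (st b z).1 = 0 := by rw [hg]
                    have h2 : (st b z).2 = 0 := by rw [hg]
                    simp only [st, hw1def, Prod.mk.injEq] at h1 h2 ⊢
                    omega
                  · have h1 : (st b z).1 = 1 := by rw [hg]
                    have h2 : (st b z).2 = 0 := by rw [hg]
                    simp only [st, hw1def, Prod.mk.injEq] at h1 h2
                    right; left
                    refine ⟨?_, hs⟩
                    simp only [st, hw1def, Prod.mk.injEq]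
                    exact ⟨by omega, by omega⟩
                  · have h1 : (st b z).1 = 0 := by rw [hg]
                    have h2 : (st b z).2 = 1 := by rw [hg]
                    simp only [st, hw1def, Prod.mk.injEq] at h1 h2
                    have : rootMultiplicity b W ≤ 1 := by omega
                    interval_cases hrw : rootMultiplicity b W
                    · left; simp only [st, hw1def, Prod.mk.injEq]
                      exact ⟨by omega, by rw [hrw]; simp⟩
                    · right; right
                      refine ⟨?_, ht⟩
                      simp only [st, hw1def, Prod.mk.injEq]
                      exact ⟨by omega, by rw [hrw]; simp⟩
                simp [wgt, hg, hg']
              · simp only [wgt, if_neg hg]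
                split_ifs with h
                · exact Nat.zero_le _
                · try simp only [hw1def]
                  omega
            · have hoff : rootMultiplicity b z.1 = 0 ∧ rootMultiplicity b z.2 = 0 ∧
                  rootMultiplicity b T'.1 = 0 ∧ rootMultiplicity b T'.2 = 0 := by
                by_contra hcon
                push_neg at hcon
                apply hbP
                apply mem_prot_of_rm_pos hT' hz
                omega
              have hg' : genStAt T' b w1 := by
                rcases hst1 b with h | h | h
                · left
                  rw [h]
                  exact Prod.ext (by simp [st, hoff.1]) (by simp [st, hoff.2.1])
                · right; left
                  refine ⟨?_, hoff.2.2.1⟩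
                  rw [h]
                  simp only [st, r0, hoff.1, hoff.2.1, hoff.2.2.1, Prod.mk.injEq]
                  norm_num
                · right; right
                  refine ⟨?_, hoff.2.2.2⟩
                  rw [h]
                  simp only [st, r1, hoff.1, hoff.2.1, hoff.2.2.2, Prod.mk.injEq]
                  norm_num
              simp [wgt, hg']
          have ha0P : a0 ∈ (z.1 * z.2 * T'.1 * T'.2).roots.toFinset := by
            apply mem_prot_of_rm_pos hT' hz
            right; left
            have := ha0m.1
            have h0le : (0:ℤ) ≤ (st a0 w1).2 := Int.natCast_nonneg _
            simp only [st] at this h0le ⊢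
            omega
          have hstrict : wgt T' w1 a0 < wgt T' z a0 := by
            simp only [wgt, if_neg ha0]
            have hm := ha0m
            split_ifs with h
            · simp only [st] at hm
              omega
            · simp only [st] at hm
              omega
          have hmeas : meas T' w1 < meas T' z := by
            rw [meas_eq_sum_superset hT' hz
                (Finset.subset_union_left (s₂ := (w1.1 * w1.2 * T'.1 * T'.2).roots.toFinset)),
              meas_eq_sum_superset hT' hnz1 (Finset.subset_union_right)]
            apply Finset.sum_lt_sum (fun b _ => hwgt b)
            exact ⟨a0, Finset.mem_union_left _ ha0P, hstrict⟩
          have hnrm1 : ∀ a : ℂ, normSt (rootMultiplicity a T'.1) (rootMultiplicity a T'.2)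
              (st a w1) = (0,0) := by
            intro a
            rcases hst1 a with h | h | h
            · rw [h]; exact hnrm a
            · rw [h, normSt_r0]; exact hnrm a
            · rw [h, normSt_r1]; exact hnrm a
          obtain ⟨w, hwc, hwz, hwgen⟩ := IH (meas T' w1) (hN ▸ hmeas) w1 hnz1
            (sf_tail hsf (Relation.ReflTransGen.single hstep)) hnrm1 rfl
          exact ⟨w, (Relation.ReflTransGen.single hstep).trans hwc, hwz, hwgen⟩
  exact H _ z hz hsf hnrm rfl


/-! ### chunk 7: genericity conversions, products -/

lemma squarefree_of_rm {q : ℂ[X]} (hq : q ≠ 0) (h : ∀ a : ℂ, rootMultiplicity a q ≤ 1) :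
    Squarefree q := by
  intro x hx
  by_contra hxu
  have hx0 : x ≠ 0 := fun h0 => hq (by simpa [h0] using hx)
  have hdeg : 0 < degree x := by
    rcases lt_trichotomy (degree x) 0 with hd | hd | hd
    · exact absurd (degree_eq_bot.mp (Nat.WithBot.lt_zero_iff.mp hd)) hx0
    · exact absurd (isUnit_iff_degree_eq_zero.mpr hd) hxu
    · exact hd
  obtain ⟨a, ha⟩ := Complex.exists_root hdeg
  have hdvd : (X - C a)^2 ∣ q := by
    have h1 : (X - C a) * (X - C a) ∣ x * x :=
      mul_dvd_mul (dvd_iff_isRoot.mpr ha) (dvd_iff_isRoot.mpr ha)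
    rw [← sq] at h1
    exact h1.trans hx
  have := (le_rootMultiplicity_iff hq).mpr hdvd
  have := h a
  omega

lemma rm_le_one_of_squarefree {q : ℂ[X]} (hq : q ≠ 0) (hs : Squarefree q) (a : ℂ) :
    rootMultiplicity a q ≤ 1 := by
  by_contra hc
  push_neg at hc
  have hdvd : (X - C a) * (X - C a) ∣ q := by
    rw [← sq]
    exact (pow_dvd_pow _ hc).trans (pow_rootMultiplicity_dvd q a)
  exact (Polynomial.not_isUnit_X_sub_C a) (hs _ hdvd)

lemma no_common_root {p q : ℂ[X]} (h : IsCoprime p q) {a : ℂ}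
    (h1 : IsRoot p a) (h2 : IsRoot q a) : False := by
  obtain ⟨u, v, huv⟩ := h
  have := congrArg (eval a) huv
  simp [IsRoot.def.mp h1, IsRoot.def.mp h2] at this

lemma coprime_of_no_common_root {p q : ℂ[X]} (hp : p ≠ 0)
    (h : ∀ a : ℂ, ¬(IsRoot p a ∧ IsRoot q a)) : IsCoprime p q := by
  rw [← EuclideanDomain.gcd_isUnit_iff]
  by_contra hdu
  have hd0 : EuclideanDomain.gcd p q ≠ 0 := fun h0 =>
    hp (EuclideanDomain.gcd_eq_zero_iff.mp h0).1
  have hdeg : 0 < degree (EuclideanDomain.gcd p q) := by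
    rcases lt_trichotomy (degree (EuclideanDomain.gcd p q)) 0 with hd | hd | hd
    · exact absurd (degree_eq_bot.mp (Nat.WithBot.lt_zero_iff.mp hd)) hd0
    · exact absurd (isUnit_iff_degree_eq_zero.mpr hd) hdu
    · exact hd
  obtain ⟨a, ha⟩ := Complex.exists_root hdeg
  refine h a ⟨?_, ?_⟩
  · exact dvd_iff_isRoot.mp ((dvd_iff_isRoot.mpr ha).trans (EuclideanDomain.gcd_dvd_left p q))
  · exact dvd_iff_isRoot.mp ((dvd_iff_isRoot.mpr ha).trans (EuclideanDomain.gcd_dvd_right p q))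

lemma rm_pos_iff {p : ℂ[X]} (hp : p ≠ 0) {a : ℂ} :
    0 < rootMultiplicity a p ↔ IsRoot p a := rootMultiplicity_pos hp

lemma genst_of_generic {T' g : ℂ[X] × ℂ[X]} (hT' : nzp T') (hnz : nzp g)
    (hg : Generic T' g) (a : ℂ) : genStAt T' a g := by
  obtain ⟨hs1, hs2, hc12, hc1T, hc2T⟩ := hg
  have m1 := rm_le_one_of_squarefree hnz.1 hs1 a
  have n1 := rm_le_one_of_squarefree hnz.2 hs2 a
  by_cases hm : rootMultiplicity a g.1 = 0
  · by_cases hn : rootMultiplicity a g.2 = 0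
    · exact Or.inl (by simp [st, hm, hn])
    · have hn1 : rootMultiplicity a g.2 = 1 := by omega
      have ht : rootMultiplicity a T'.2 = 0 := by
        by_contra ht
        have hr2 : IsRoot g.2 a := (rm_pos_iff hnz.2).mp (Nat.pos_of_ne_zero hn)
        have hrT : IsRoot T'.2 a := (rm_pos_iff hT'.2).mp (Nat.pos_of_ne_zero ht)
        exact no_common_root hc2T hr2 hrT
      exact Or.inr (Or.inr ⟨by simp [st, hm, hn1], ht⟩)
  · have hm1 : rootMultiplicity a g.1 = 1 := by omega
    have hn : rootMultiplicity a g.2 = 0 := by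
      by_contra hn
      have hr1 : IsRoot g.1 a := (rm_pos_iff hnz.1).mp (Nat.pos_of_ne_zero hm)
      have hr2 : IsRoot g.2 a := (rm_pos_iff hnz.2).mp (Nat.pos_of_ne_zero hn)
      exact no_common_root hc12 hr1 hr2
    have hs : rootMultiplicity a T'.1 = 0 := by
      by_contra ht
      have hr1 : IsRoot g.1 a := (rm_pos_iff hnz.1).mp (Nat.pos_of_ne_zero hm)
      have hrT : IsRoot T'.1 a := (rm_pos_iff hT'.1).mp (Nat.pos_of_ne_zero ht)
      exact no_common_root hc1T hr1 hrT
    exact Or.inr (Or.inl ⟨by simp [st, hm1, hn], hs⟩)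

lemma generic_of_genst {T' g : ℂ[X] × ℂ[X]} (hT' : nzp T') (hnz : nzp g)
    (h : ∀ a, genStAt T' a g) : Generic T' g := by
  have hma : ∀ a, rootMultiplicity a g.1 ≤ 1 ∧ rootMultiplicity a g.2 ≤ 1 ∧
      (rootMultiplicity a g.1 = 0 ∨ rootMultiplicity a g.2 = 0) ∧
      (rootMultiplicity a g.1 = 0 ∨ rootMultiplicity a T'.1 = 0) ∧
      (rootMultiplicity a g.2 = 0 ∨ rootMultiplicity a T'.2 = 0) := by
    intro a
    rcases h a with hh | ⟨hh, hs⟩ | ⟨hh, ht⟩ <;>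
    · have h1 := congrArg Prod.fst hh
      have h2 := congrArg Prod.snd hh
      simp only [st] at h1 h2
      refine ⟨by omega, by omega, by omega, by omega, by omega⟩
  refine ⟨squarefree_of_rm hnz.1 (fun a => (hma a).1),
    squarefree_of_rm hnz.2 (fun a => (hma a).2.1),
    coprime_of_no_common_root hnz.1 ?_,
    coprime_of_no_common_root hnz.1 ?_,
    coprime_of_no_common_root hnz.2 ?_⟩
  · rintro a ⟨h1, h2⟩
    have := (hma a).2.2.1
    have := (rm_pos_iff hnz.1).mpr h1
    have := (rm_pos_iff hnz.2).mpr h2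
    omega
  · rintro a ⟨h1, h2⟩
    have := (hma a).2.2.2.1
    have := (rm_pos_iff hnz.1).mpr h1
    have := (rm_pos_iff hT'.1).mpr h2
    omega
  · rintro a ⟨h1, h2⟩
    have := (hma a).2.2.2.2
    have := (rm_pos_iff hnz.2).mpr h1
    have := (rm_pos_iff hT'.2).mpr h2
    omega

lemma norm_genst {T' g : ℂ[X] × ℂ[X]} (a : ℂ) (h : genStAt T' a g) :
    normSt (rootMultiplicity a T'.1) (rootMultiplicity a T'.2) (st a g) = (0,0) := by
  rcases h with hh | ⟨hh, hs⟩ | ⟨hh, ht⟩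
  · rw [hh]
    exact normSt_fix (by simp <;> omega) (by simp <;> omega)
  · rw [hh, hs]
    have h1 : ((1:ℤ),(0:ℤ)) = r0 (0:ℕ) ((0:ℤ),(0:ℤ)) := by
      simp [r0]
    rw [h1, normSt_r0]
    exact normSt_fix (by simp <;> omega) (by simp <;> omega)
  · rw [hh, ht]
    have h1 : ((0:ℤ),(1:ℤ)) = r1 (0:ℕ) ((0:ℤ),(0:ℤ)) := by
      simp [r1]
    rw [h1, normSt_r1]
    exact normSt_fix (by simp <;> omega) (by simp <;> omega)

lemma rm_prodPow (A : Finset ℂ) (e : ℂ → ℕ) (b : ℂ) :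
    rootMultiplicity b (∏ a ∈ A, (X - C a)^(e a)) = if b ∈ A then e b else 0 := by
  classical
  induction A using Finset.induction_on with
  | empty =>
      simp only [Finset.prod_empty, Finset.notMem_empty, if_neg]
      exact rootMultiplicity_eq_zero (by simp [IsRoot])
  | @insert a s ha IH =>
      rw [Finset.prod_insert ha]
      have hne : (X - C a)^(e a) ≠ 0 := pow_ne_zero _ (X_sub_C_ne_zero a)
      have hprod : (∏ x ∈ s, (X - C x)^(e x)) ≠ 0 :=
        Finset.prod_ne_zero_iff.mpr (fun x _ => pow_ne_zero _ (X_sub_C_ne_zero x))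
      rw [rootMultiplicity_mul (mul_ne_zero hne hprod), IH]
      by_cases hb : b = a
      · subst hb
        rw [rootMultiplicity_X_sub_C_pow]
        rw [if_neg ha, if_pos (Finset.mem_insert_self b s)]
        omega
      · have h0 : rootMultiplicity b ((X - C a)^(e a)) = 0 := by
          apply rootMultiplicity_eq_zero
          simp only [IsRoot, eval_pow, eval_sub, eval_X, eval_C]
          exact pow_ne_zero _ (sub_ne_zero_of_ne hb)
        rw [h0]
        by_cases hbs : b ∈ s
        · rw [if_pos hbs, if_pos (Finset.mem_insert_of_mem hbs)]
          omega
        · rw [if_neg hbs, if_neg (by simp [hb, hbs])]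

lemma monic_prodPow (A : Finset ℂ) (e : ℂ → ℕ) :
    (∏ a ∈ A, (X - C a)^(e a)).Monic :=
  monic_prod_of_monic _ _ (fun a _ => (monic_X_sub_C a).pow (e a))

lemma fertile_scale {T w : ℂ[X] × ℂ[X]} {e0 e1 : ℂ} (h0 : e0^2 = 1) (h1 : e1^2 = 1)
    (hf : Fertile T w) : Fertile T (C e0 * w.1, C e1 * w.2) := by
  obtain ⟨hw1, hw2, ty0, ty1, ht0, ht1⟩ := hf
  have he0 : e0 ≠ 0 := fun h => by simp [h] at h0
  have he1 : e1 ≠ 0 := fun h => by simp [h] at h1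
  have he0' : e0 * e0 = 1 := by rw [← sq]; exact h0
  have he1' : e1 * e1 = 1 := by rw [← sq]; exact h1
  refine ⟨mul_ne_zero (C_ne_zero.mpr he0) hw1, mul_ne_zero (C_ne_zero.mpr he1) hw2,
    C e0 * ty0, C e1 * ty1, ?_, ?_⟩
  · show pWr (C e0 * w.1) (C e0 * ty0) = T.1 * (C e1 * w.2)^2
    rw [pWr_C_C, ht0, he0', mul_pow, ← C_pow, h1]
    simp
  · show pWr (C e1 * w.2) (C e1 * ty1) = T.2 * (C e0 * w.1)^2
    rw [pWr_C_C, ht1, he1', mul_pow, ← C_pow, h0]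
    simp


/-! ### chunk 8: decomposition normal form (uniqueness core) -/

lemma rm_sq (a : ℂ) {f : ℂ[X]} (hf : f ≠ 0) :
    rootMultiplicity a (f^2) = 2 * rootMultiplicity a f := by
  rw [sq, rootMultiplicity_mul (mul_ne_zero hf hf)]; ring

lemma rm_div_eq {T0c f0 f1 T0 : ℂ[X]} (hT0 : T0c ≠ 0) (hf0 : f0 ≠ 0) (hf1 : f1 ≠ 0)
    (hd0 : T0c * f1^2 = f0^2 * T0) (a : ℂ) :
    (rootMultiplicity a T0c : ℤ) = rootMultiplicity a T0
      + 2*(rootMultiplicity a f0) - 2*(rootMultiplicity a f1) := by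
  have hL : T0c * f1^2 ≠ 0 := mul_ne_zero hT0 (pow_ne_zero _ hf1)
  have e1 := rootMultiplicity_mul (x := a) hL
  have e2 := rootMultiplicity_mul (x := a) (hd0 ▸ hL)
  rw [hd0, e2] at e1
  rw [rm_sq a hf1, rm_sq a hf0] at e1
  push_cast
  omega

lemma decomp_norm {T0c T1c f0 f1 : ℂ[X]} {y : ℂ[X] × ℂ[X]} {T0 T1 : ℂ[X]}
    (hT0 : T0c ≠ 0) (hT1 : T1c ≠ 0) (hf0 : f0 ≠ 0) (hf1 : f1 ≠ 0)
    (hy : nzp y)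
    (hd0 : T0c * f1^2 = f0^2 * T0) (hd1 : T1c * f0^2 = f1^2 * T1)
    (hpop : InPopulation (T0, T1) y) (a : ℂ) :
    normSt (rootMultiplicity a T0c) (rootMultiplicity a T1c)
      ((st a y).1 + (rootMultiplicity a f0 : ℤ), (st a y).2 + (rootMultiplicity a f1 : ℤ))
      = ((rootMultiplicity a f0 : ℤ), (rootMultiplicity a f1 : ℤ)) := by
  obtain ⟨g, ⟨hgen, hfert⟩, hchain⟩ := hpop
  have hT0' : T0 ≠ 0 := by
    intro h
    rw [h, mul_zero] at hd0
    exact (mul_ne_zero hT0 (pow_ne_zero _ hf1)) hd0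
  have hT1' : T1 ≠ 0 := by
    intro h
    rw [h, mul_zero] at hd1
    exact (mul_ne_zero hT1 (pow_ne_zero _ hf0)) hd1
  have hTnz : nzp ((T0, T1) : ℂ[X] × ℂ[X]) := ⟨hT0', hT1'⟩
  have hnzg : nzp g := ⟨hfert.1, hfert.2.1⟩
  have hcf := chain_facts hTnz hnzg hchain
  have hng := norm_genst a (genst_of_generic hTnz hnzg hgen a)
  have hny : normSt (rootMultiplicity a T0) (rootMultiplicity a T1) (st a y) = (0,0) := by
    have h2 := hcf.2 a
    dsimp only at h2 hng
    rw [hng] at h2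
    exact h2
  have hs := rm_div_eq hT0 hf0 hf1 hd0 a
  have ht := rm_div_eq hT1 hf1 hf0 hd1 a
  have htr := norm_translate (rootMultiplicity a T0) (rootMultiplicity a T1)
    (rootMultiplicity a f0) (rootMultiplicity a f1)
    (rootMultiplicity a T0c) (rootMultiplicity a T1c) hs ht (st a y)
  rw [hny] at htr
  rw [htr]
  simp

end SFP

section MainProof

open SFP

/-- Every super-fertile pair `(y₀°,y₁°)` w.r.t. `(T₀°,T₁°)` arises uniquely as
`(f₀·y₀, f₁·y₁)` from monic `f₀, f₁` and a pair `(y₀,y₁)` in a population of critical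
points corresponding to `(T₀°·f₁²/f₀², T₁°·f₀²/f₁²)`. -/
theorem superfertile_from_population (T0c T1c y0c y1c : ℂ[X])
    (hT0 : T0c ≠ 0) (hT1 : T1c ≠ 0) (hy0 : y0c ≠ 0) (hy1 : y1c ≠ 0)
    (hsf : SuperFertile (T0c, T1c) (y0c, y1c)) :
    ∃! q : (ℂ[X] × ℂ[X]) × (ℂ[X] × ℂ[X]),
      q.1.1.Monic ∧ q.1.2.Monic ∧
      ∃ T0 T1 : ℂ[X],
        T0c * q.1.2 ^ 2 = q.1.1 ^ 2 * T0 ∧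
        T1c * q.1.1 ^ 2 = q.1.2 ^ 2 * T1 ∧
        InPopulation (T0, T1) q.2 ∧
        y0c = q.1.1 * q.2.1 ∧ y1c = q.1.2 * q.2.2 := by

  classical
  have hT : nzp ((T0c, T1c) : ℂ[X] × ℂ[X]) := ⟨hT0, hT1⟩
  have hY : nzp ((y0c, y1c) : ℂ[X] × ℂ[X]) := ⟨hy0, hy1⟩
  have hNFfacts0 := fun a : ℂ => norm_facts hT hY hsf a
  set NF : ℂ → ℤ × ℤ := fun a =>
    normSt (rootMultiplicity a T0c) (rootMultiplicity a T1c) (st a (y0c, y1c)) with hNF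
  have hNFfacts : ∀ a : ℂ, 0 ≤ (NF a).1 ∧ 0 ≤ (NF a).2 ∧
      -((rootMultiplicity a T1c : ℤ)) ≤ 2*((NF a).1 - (NF a).2) ∧
      2*((NF a).1 - (NF a).2) ≤ (rootMultiplicity a T0c : ℤ) := fun a => hNFfacts0 a
  set p : ℂ → ℕ := fun a => (NF a).1.toNat with hpdef
  set q : ℂ → ℕ := fun a => (NF a).2.toNat with hqdef
  have hNF1 : ∀ a, ((p a : ℤ)) = (NF a).1 := fun a => Int.toNat_of_nonneg (hNFfacts a).1
  have hNF2 : ∀ a, ((q a : ℤ)) = (NF a).2 := fun a => Int.toNat_of_nonneg (hNFfacts a).2.1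
  have hstY0 : ∀ a : ℂ, st a ((y0c, y1c) : ℂ[X] × ℂ[X]) =
      ((rootMultiplicity a y0c : ℤ), (rootMultiplicity a y1c : ℤ)) := fun a => rfl
  have hple : ∀ a, p a ≤ rootMultiplicity a y0c := by
    intro a
    have h := (normSt_le (rootMultiplicity a T0c) (rootMultiplicity a T1c)
      (st a (y0c, y1c))).1
    have h2 := hNF1 a
    rw [show NF a = normSt (rootMultiplicity a T0c) (rootMultiplicity a T1c)
      (((rootMultiplicity a y0c : ℤ), (rootMultiplicity a y1c : ℤ)) : ℤ × ℤ) from rfl] at h2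
    rw [hstY0 a] at h
    omega
  have hqle : ∀ a, q a ≤ rootMultiplicity a y1c := by
    intro a
    have h := (normSt_le (rootMultiplicity a T0c) (rootMultiplicity a T1c)
      (st a (y0c, y1c))).2
    have h2 := hNF2 a
    rw [show NF a = normSt (rootMultiplicity a T0c) (rootMultiplicity a T1c)
      (((rootMultiplicity a y0c : ℤ), (rootMultiplicity a y1c : ℤ)) : ℤ × ℤ) from rfl] at h2
    rw [hstY0 a] at h
    omega
  set F0 : ℂ[X] := ∏ a ∈ y0c.roots.toFinset, (X - C a)^(p a) with hF0def
  set F1 : ℂ[X] := ∏ a ∈ y1c.roots.toFinset, (X - C a)^(q a) with hF1def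
  have hF0m : F0.Monic := monic_prodPow _ _
  have hF1m : F1.Monic := monic_prodPow _ _
  have hrmF0 : ∀ b, rootMultiplicity b F0 = p b := by
    intro b
    rw [hF0def, rm_prodPow]
    split_ifs with hb
    · rfl
    · have hb' : rootMultiplicity b y0c = 0 := by
        apply rootMultiplicity_eq_zero
        intro hr
        exact hb (Multiset.mem_toFinset.mpr ((mem_roots hy0).mpr hr))
      have := hple b
      omega
  have hrmF1 : ∀ b, rootMultiplicity b F1 = q b := by
    intro b
    rw [hF1def, rm_prodPow]
    split_ifs with hb
    · rfl
    · have hb' : rootMultiplicity b y1c = 0 := by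
        apply rootMultiplicity_eq_zero
        intro hr
        exact hb (Multiset.mem_toFinset.mpr ((mem_roots hy1).mpr hr))
      have := hqle b
      omega
  obtain ⟨Y0, hY0⟩ : F0 ∣ y0c :=
    dvd_of_rm_le hF0m.ne_zero hy0 (fun a => by rw [hrmF0]; exact hple a)
  obtain ⟨Y1, hY1⟩ : F1 ∣ y1c :=
    dvd_of_rm_le hF1m.ne_zero hy1 (fun a => by rw [hrmF1]; exact hqle a)
  have hY0ne : Y0 ≠ 0 := fun h => hy0 (by rw [hY0, h, mul_zero])
  have hY1ne : Y1 ≠ 0 := fun h => hy1 (by rw [hY1, h, mul_zero])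
  have hrm0 : ∀ a, rootMultiplicity a y0c = p a + rootMultiplicity a Y0 := by
    intro a
    have h1 : rootMultiplicity a y0c = rootMultiplicity a (F0 * Y0) := by rw [← hY0]
    rw [rootMultiplicity_mul (by rw [← hY0]; exact hy0), hrmF0] at h1
    exact h1
  have hrm1 : ∀ a, rootMultiplicity a y1c = q a + rootMultiplicity a Y1 := by
    intro a
    have h1 : rootMultiplicity a y1c = rootMultiplicity a (F1 * Y1) := by rw [← hY1]
    rw [rootMultiplicity_mul (by rw [← hY1]; exact hy1), hrmF1] at h1
    exact h1
  obtain ⟨T0, hT0eq⟩ : F0^2 ∣ T0c * F1^2 := by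
    apply dvd_of_rm_le (pow_ne_zero _ hF0m.ne_zero)
      (mul_ne_zero hT0 (pow_ne_zero _ hF1m.ne_zero))
    intro a
    rw [rm_sq a hF0m.ne_zero, hrmF0,
      rootMultiplicity_mul (mul_ne_zero hT0 (pow_ne_zero _ hF1m.ne_zero)),
      rm_sq a hF1m.ne_zero, hrmF1]
    have h3 := (hNFfacts a).2.2.2
    have h1 := hNF1 a
    have h2 := hNF2 a
    omega
  obtain ⟨T1, hT1eq⟩ : F1^2 ∣ T1c * F0^2 := by
    apply dvd_of_rm_le (pow_ne_zero _ hF1m.ne_zero)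
      (mul_ne_zero hT1 (pow_ne_zero _ hF0m.ne_zero))
    intro a
    rw [rm_sq a hF1m.ne_zero, hrmF1,
      rootMultiplicity_mul (mul_ne_zero hT1 (pow_ne_zero _ hF0m.ne_zero)),
      rm_sq a hF0m.ne_zero, hrmF0]
    have h3 := (hNFfacts a).2.2.1
    have h1 := hNF1 a
    have h2 := hNF2 a
    omega
  have hT0ne : T0 ≠ 0 := by
    intro h
    rw [h, mul_zero] at hT0eq
    exact (mul_ne_zero hT0 (pow_ne_zero _ hF1m.ne_zero)) hT0eq
  have hT1ne : T1 ≠ 0 := by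
    intro h
    rw [h, mul_zero] at hT1eq
    exact (mul_ne_zero hT1 (pow_ne_zero _ hF0m.ne_zero)) hT1eq
  have hT'nz : nzp ((T0, T1) : ℂ[X] × ℂ[X]) := ⟨hT0ne, hT1ne⟩
  have hs' := fun a => rm_div_eq hT0 hF0m.ne_zero hF1m.ne_zero hT0eq a
  have ht' := fun a => rm_div_eq hT1 hF1m.ne_zero hF0m.ne_zero hT1eq a
  -- normalized states of the reduced pair vanish
  have hnrm : ∀ a : ℂ, normSt (rootMultiplicity a T0) (rootMultiplicity a T1)
      (st a ((Y0, Y1) : ℂ[X] × ℂ[X])) = (0,0) := by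
    intro a
    have htr := norm_translate (rootMultiplicity a T0) (rootMultiplicity a T1)
      (p a) (q a) (rootMultiplicity a T0c) (rootMultiplicity a T1c)
      (by have h1 := hs' a; have h4 := hrmF0 a; have h5 := hrmF1 a; omega)
      (by have h1 := ht' a; have h4 := hrmF0 a; have h5 := hrmF1 a; omega)
      (st a ((Y0, Y1) : ℂ[X] × ℂ[X]))
    have hstY : (((st a ((Y0, Y1) : ℂ[X] × ℂ[X])).1 + (p a : ℤ),
        (st a ((Y0, Y1) : ℂ[X] × ℂ[X])).2 + (q a : ℤ))) = st a ((y0c, y1c) : ℂ[X] × ℂ[X]) := by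
      simp only [st, Prod.mk.injEq]
      have h0 := hrm0 a
      have h1 := hrm1 a
      constructor
      · push_cast
        omega
      · push_cast
        omega
    rw [hstY] at htr
    have hNFpq : (NF a) = ((p a : ℤ), (q a : ℤ)) := by
      have h1 := hNF1 a
      have h2 := hNF2 a
      exact Prod.ext (by omega) (by omega)
    have hNFa : NF a = normSt (rootMultiplicity a T0c) (rootMultiplicity a T1c)
        (st a ((y0c, y1c) : ℂ[X] × ℂ[X])) := rfl
    rw [← hNFa] at htr
    rw [hNFpq] at htr
    have hfst := congrArg Prod.fst htr
    have hsnd := congrArg Prod.snd htr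
    dsimp only at hfst hsnd
    exact Prod.ext (by omega) (by omega)
  -- superfertility of the reduced pair
  have hpair : ((y0c, y1c) : ℂ[X] × ℂ[X]) = (F0 * Y0, F1 * Y1) := by
    rw [Prod.mk.injEq]
    exact ⟨hY0, hY1⟩
  have hsf2 : SuperFertile (T0c, T1c) (F0 * Y0, F1 * Y1) := by
    rw [← hpair]
    exact hsf
  have hsf' : SuperFertile (T0, T1) (Y0, Y1) :=
    sf_reduce hT hT'nz hF0m.ne_zero hF1m.ne_zero hT0eq hT1eq ⟨hY0ne, hY1ne⟩ hsf2 hnrm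
  -- descend to a generic pair
  obtain ⟨w, hwch, hwnz, hwgen⟩ := descend hT'nz (Y0, Y1) ⟨hY0ne, hY1ne⟩ hsf' hnrm
  have hwfert : Fertile (T0, T1) w := hsf' w hwch
  -- reverse the chain
  obtain ⟨e0, e1, he0, he1, hrev⟩ := chain_reverse hwch
  have he0ne : e0 ≠ 0 := fun h => by simp [h] at he0
  have he1ne : e1 ≠ 0 := fun h => by simp [h] at he1
  have hrevsc := chain_scale he0 he1 hrev
  have hback : (C e0 * (C e0 * ((Y0, Y1) : ℂ[X] × ℂ[X]).1),
      C e1 * (C e1 * ((Y0, Y1) : ℂ[X] × ℂ[X]).2)) = ((Y0, Y1) : ℂ[X] × ℂ[X]) := by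
    have h0 : e0 * e0 = 1 := by rw [← sq]; exact he0
    have h1 : e1 * e1 = 1 := by rw [← sq]; exact he1
    rw [Prod.mk.injEq]
    constructor
    · rw [← mul_assoc, ← C_mul, h0]
      simp
    · rw [← mul_assoc, ← C_mul, h1]
      simp
  rw [hback] at hrevsc
  -- the scaled endpoint is a critical point
  have hwsc_nz : nzp ((C e0 * w.1, C e1 * w.2) : ℂ[X] × ℂ[X]) :=
    ⟨mul_ne_zero (C_ne_zero.mpr he0ne) hwnz.1, mul_ne_zero (C_ne_zero.mpr he1ne) hwnz.2⟩
  have hwsc_genst : ∀ a, genStAt (T0, T1) a (C e0 * w.1, C e1 * w.2) := by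
    intro a
    have hsteq : st a ((C e0 * w.1, C e1 * w.2) : ℂ[X] × ℂ[X]) = st a w := by
      simp only [st]
      rw [rm_C_mul a he0ne w.1 hwnz.1, rm_C_mul a he1ne w.2 hwnz.2]
    have hg := hwgen a
    rcases hg with h | ⟨h, hs⟩ | ⟨h, ht⟩
    · exact Or.inl (by rw [hsteq]; exact h)
    · exact Or.inr (Or.inl ⟨by rw [hsteq]; exact h, hs⟩)
    · exact Or.inr (Or.inr ⟨by rw [hsteq]; exact h, ht⟩)
  have hcrit : IsCriticalPt (T0, T1) (C e0 * w.1, C e1 * w.2) :=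
    ⟨generic_of_genst hT'nz hwsc_nz hwsc_genst, fertile_scale he0 he1 hwfert⟩
  have hpop : InPopulation (T0, T1) ((Y0, Y1) : ℂ[X] × ℂ[X]) :=
    ⟨(C e0 * w.1, C e1 * w.2), hcrit, hrevsc⟩
  -- assemble existence
  refine ⟨((F0, F1), (Y0, Y1)), ⟨hF0m, hF1m, T0, T1, hT0eq, hT1eq, hpop, hY0, hY1⟩, ?_⟩
  -- uniqueness
  rintro ⟨⟨g0, g1⟩, z⟩ ⟨hg0m, hg1m, T0', T1', he0', he1', hpop', hz0, hz1⟩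
  dsimp only at hg0m hg1m he0' he1' hpop' hz0 hz1
  have hg0ne : g0 ≠ 0 := hg0m.ne_zero
  have hg1ne : g1 ≠ 0 := hg1m.ne_zero
  have hz0ne : z.1 ≠ 0 := fun h => hy0 (by rw [hz0, h, mul_zero])
  have hz1ne : z.2 ≠ 0 := fun h => hy1 (by rw [hz1, h, mul_zero])
  have hkey : ∀ a : ℂ, (rootMultiplicity a g0 : ℤ) = (NF a).1 ∧
      (rootMultiplicity a g1 : ℤ) = (NF a).2 := by
    intro a
    have hdn := decomp_norm hT0 hT1 hg0ne hg1ne ⟨hz0ne, hz1ne⟩ he0' he1' hpop' a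
    have hstY : (((st a z).1 + (rootMultiplicity a g0 : ℤ),
        (st a z).2 + (rootMultiplicity a g1 : ℤ))) = st a ((y0c, y1c) : ℂ[X] × ℂ[X]) := by
      simp only [st, Prod.mk.injEq]
      have h0 : rootMultiplicity a y0c = rootMultiplicity a g0 + rootMultiplicity a z.1 := by
        have h1 : rootMultiplicity a y0c = rootMultiplicity a (g0 * z.1) := by rw [← hz0]
        rw [rootMultiplicity_mul (by rw [← hz0]; exact hy0)] at h1
        exact h1
      have h1 : rootMultiplicity a y1c = rootMultiplicity a g1 + rootMultiplicity a z.2 := by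
        have h2 : rootMultiplicity a y1c = rootMultiplicity a (g1 * z.2) := by rw [← hz1]
        rw [rootMultiplicity_mul (by rw [← hz1]; exact hy1)] at h2
        exact h2
      constructor
      · push_cast
        omega
      · push_cast
        omega
    rw [hstY] at hdn
    have hNFa : NF a = normSt (rootMultiplicity a T0c) (rootMultiplicity a T1c)
        (st a ((y0c, y1c) : ℂ[X] × ℂ[X])) := rfl
    rw [← hNFa] at hdn
    have hfst := congrArg Prod.fst hdn
    have hsnd := congrArg Prod.snd hdn
    dsimp only at hfst hsnd
    exact ⟨by rw [hfst], by rw [hsnd]⟩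
  have hg0F0 : g0 = F0 := by
    apply monic_eq_of_rm hg0m hF0m
    intro a
    have h1 := (hkey a).1
    have h2 := hNF1 a
    have h3 := hrmF0 a
    omega
  have hg1F1 : g1 = F1 := by
    apply monic_eq_of_rm hg1m hF1m
    intro a
    have h1 := (hkey a).2
    have h2 := hNF2 a
    have h3 := hrmF1 a
    omega
  have hz0Y0 : z.1 = Y0 := by
    apply mul_left_cancel₀ hF0m.ne_zero
    rw [← hg0F0] at hY0 ⊢
    rw [← hz0, ← hY0]
  have hz1Y1 : z.2 = Y1 := by
    apply mul_left_cancel₀ hF1m.ne_zero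
    rw [← hg1F1] at hY1 ⊢
    rw [← hz1, ← hY1]
  rw [Prod.mk.injEq, Prod.mk.injEq]
  refine ⟨⟨hg0F0, hg1F1⟩, ?_⟩
  exact Prod.ext hz0Y0 hz1Y1

end MainProof
end
end

section
/- Let (T₀,T₁) be a pair of nonzero complex polynomials. Suppose (y₀,y₁) and (ȳ₀,ȳ₁) are pairs of monic complex polynomials, each lying in a (possibly different) population of critical points corresponding to (T₀,T₁). If y₀·ȳ₁ = ȳ₀·y₁ (equivalently, y₀/y₁ = ȳ₀/ȳ₁ as rational functions), then y₀ = ȳ₀ and y₁ = ȳ₁. -/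
open Polynomial

noncomputable section

/-!
At a point `x`, let `φ, γ` be the orders of `y₀, y₁` and `t₀, t₁` those of `T₀, T₁`. For a
critical point `φ, γ ≤ 1`, they are not both `1`, and `φ = 1` forces `t₀ = 0` (resp. `γ = 1`
forces `t₁ = 0`), so `(φ - γ)² = (t₀ + 1)φ + (t₁ + 1)γ`. This relation survives reproduction: if
`Wr(y₀, ỹ₀) = T₀ y₁²` and `ỹ₀` has an order `ψ ≠ φ` at `x`, then comparing orders in the Wronskian
gives `φ + ψ - 1 = t₀ + 2γ`, so `ψ` is the other root of the relation viewed as a quadratic in `φ`.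
Two pairs with the same ratio have the same `φ - γ` at every point, and the relation then gives
`(t₀ + t₁ + 2)(γ - γ̄) = 0`. Monic polynomials over `ℂ` with the same orders everywhere coincide.
-/

namespace Polynomial

variable {R : Type*} [CommRing R]

theorem derivative_X_sub_C_pow_mul_X_sub_C (a : R) (m : ℕ) :
    derivative ((X - C a) ^ m) * (X - C a) = C (m : R) * (X - C a) ^ m := by
  cases m with
  | zero => simp
  | succ m => rw [derivative_X_sub_C_pow, Nat.add_sub_cancel, mul_assoc, ← pow_succ]

/-- The extra factor `X - C a` keeps the exponent `m + n - 1` (truncated when `m = n = 0`) out of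
the statement. -/
theorem wronskian_X_sub_C_pow_mul_mul_X_sub_C (a : R) (m n : ℕ) (F H : R[X]) :
    wronskian ((X - C a) ^ m * F) ((X - C a) ^ n * H) * (X - C a) =
      (C ((n : R) - m) * F * H + wronskian F H * (X - C a)) * (X - C a) ^ (m + n) := by
  have hm := derivative_X_sub_C_pow_mul_X_sub_C a m
  have hn := derivative_X_sub_C_pow_mul_X_sub_C a n
  simp only [wronskian, derivative_mul, C_sub]
  linear_combination ((X - C a) ^ m * F * H) * hn - (F * (X - C a) ^ n * H) * hm

theorem rootMultiplicity_wronskian_add_one [IsDomain R] [CharZero R] {f h : R[X]} {a : R}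
    (hf : f ≠ 0) (hh : h ≠ 0) (hne : f.rootMultiplicity a ≠ h.rootMultiplicity a) :
    (wronskian f h).rootMultiplicity a + 1 = f.rootMultiplicity a + h.rootMultiplicity a := by
  obtain ⟨F, hfF, hF⟩ := f.exists_eq_pow_rootMultiplicity_mul_and_not_dvd hf a
  obtain ⟨H, hhH, hH⟩ := h.exists_eq_pow_rootMultiplicity_mul_and_not_dvd hh a
  set m := f.rootMultiplicity a
  set n := h.rootMultiplicity a
  set G := C ((n : R) - m) * F * H + wronskian F H * (X - C a)
  have hG : G.eval a ≠ 0 := by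
    rw [dvd_iff_isRoot, IsRoot.def] at hF hH
    have hnm : (n : R) - m ≠ 0 := sub_ne_zero.2 (Nat.cast_injective.ne hne.symm)
    simpa [G] using mul_ne_zero (mul_ne_zero hnm hF) hH
  have hG0 : G ≠ 0 := fun h0 => hG (by rw [h0, eval_zero])
  have hW : wronskian f h ≠ 0 := by
    intro hW
    have := wronskian_X_sub_C_pow_mul_mul_X_sub_C a m n F H
    rw [← hfF, ← hhH, hW, zero_mul] at this
    exact mul_ne_zero hG0 (pow_ne_zero _ (X_sub_C_ne_zero a)) this.symm
  have key := congrArg (rootMultiplicity a) (wronskian_X_sub_C_pow_mul_mul_X_sub_C a m n F H)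
  have hWa := rootMultiplicity_mul_X_sub_C_pow (a := a) (n := 1) hW
  rw [pow_one] at hWa
  rwa [← hfF, ← hhH, hWa, rootMultiplicity_mul_X_sub_C_pow hG0, rootMultiplicity_eq_zero hG,
    zero_add] at key

theorem Monic.eq_of_rootMultiplicity_eq {k : Type*} [Field k] [IsAlgClosed k] {p q : k[X]}
    (hp : p.Monic) (hq : q.Monic) (h : ∀ x, p.rootMultiplicity x = q.rootMultiplicity x) :
    p = q := by
  classical
  refine eq_of_monic_of_associated hp hq
    ((IsAlgClosed.associated_iff_roots_eq_roots hp.ne_zero hq.ne_zero).2 ?_)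
  ext x
  rw [count_roots, count_roots, h]

theorem IsCoprime.rootMultiplicity_eq_zero_or {p q : R[X]} (h : IsCoprime p q) (x : R) :
    p.rootMultiplicity x = 0 ∨ q.rootMultiplicity x = 0 := by
  nontriviality R
  exact (aeval_ne_zero_of_isCoprime h x).imp rootMultiplicity_eq_zero rootMultiplicity_eq_zero

end Polynomial

def QuadricOrders (t₀ t₁ φ γ : ℕ) : Prop :=
  ((φ : ℤ) - γ) ^ 2 = (t₀ + 1) * φ + (t₁ + 1) * γ

theorem quadricOrders_of_le_one {t₀ t₁ φ γ : ℕ} (hφ : φ ≤ 1) (hγ : γ ≤ 1) (hφγ : φ = 0 ∨ γ = 0)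
    (ht₀ : φ = 0 ∨ t₀ = 0) (ht₁ : γ = 0 ∨ t₁ = 0) : QuadricOrders t₀ t₁ φ γ := by
  interval_cases φ <;> interval_cases γ <;> simp_all [QuadricOrders]

namespace QuadricOrders

variable {t₀ t₁ φ γ : ℕ}

theorem swap (h : QuadricOrders t₀ t₁ φ γ) : QuadricOrders t₁ t₀ γ φ := by
  unfold QuadricOrders at *
  linear_combination h

theorem of_add_eq {ψ : ℕ} (h : QuadricOrders t₀ t₁ φ γ) (hψ : φ + ψ = t₀ + 2 * γ + 1) :
    QuadricOrders t₀ t₁ ψ γ := by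
  unfold QuadricOrders at *
  have hψ' : (φ : ℤ) + ψ = t₀ + 2 * γ + 1 := by exact_mod_cast hψ
  linear_combination h + ((ψ : ℤ) - φ) * hψ'

theorem eq_of_add_eq {φ' γ' : ℕ} (h : QuadricOrders t₀ t₁ φ γ) (h' : QuadricOrders t₀ t₁ φ' γ')
    (hd : φ + γ' = φ' + γ) : φ = φ' ∧ γ = γ' := by
  unfold QuadricOrders at *
  have hd' : (φ : ℤ) - φ' = γ - γ' := by omega
  have hγ : ((t₀ : ℤ) + t₁ + 2) * (γ - γ') = 0 := by
    linear_combination h' - h + ((φ : ℤ) - γ + φ' - γ' - t₀ - 1) * hd'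
  have : (γ : ℤ) - γ' = 0 := (mul_eq_zero.1 hγ).resolve_left (by positivity)
  omega

end QuadricOrders

def HasQuadricOrders (T y : ℂ[X] × ℂ[X]) : Prop :=
  y.1 ≠ 0 ∧ y.2 ≠ 0 ∧ ∀ x : ℂ, QuadricOrders (T.1.rootMultiplicity x) (T.2.rootMultiplicity x)
    (y.1.rootMultiplicity x) (y.2.rootMultiplicity x)

namespace HasQuadricOrders

variable {T y z : ℂ[X] × ℂ[X]}

theorem swap (hy : HasQuadricOrders T y) : HasQuadricOrders T.swap y.swap :=
  ⟨hy.2.1, hy.1, fun x => (hy.2.2 x).swap⟩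

theorem of_reprod0 (hT : T.1 ≠ 0) (hy : HasQuadricOrders T y) (hr : Reprod0 T y z) :
    HasQuadricOrders T z := by
  obtain ⟨hy₀, hy₁, hq⟩ := hy
  rcases z with ⟨z₀, z₁⟩
  obtain ⟨rfl : z₁ = y.2, hW⟩ := hr
  have hrhs : T.1 * y.2 ^ 2 ≠ 0 := mul_ne_zero hT (pow_ne_zero 2 hy₁)
  have hz₀ : z₀ ≠ 0 := by
    rintro rfl
    exact hrhs (hW.symm.trans (wronskian_zero_right y.1))
  refine ⟨hz₀, hy₁, fun x => ?_⟩
  dsimp only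
  by_cases hsame : z₀.rootMultiplicity x = y.1.rootMultiplicity x
  · exact hsame ▸ hq x
  · have hsum := rootMultiplicity_wronskian_add_one hy₀ hz₀ (Ne.symm hsame) (a := x)
    rw [show wronskian y.1 z₀ = T.1 * y.2 ^ 2 from hW, rootMultiplicity_mul hrhs, sq,
      rootMultiplicity_mul (mul_ne_zero hy₁ hy₁)] at hsum
    exact (hq x).of_add_eq (by omega)

theorem of_reprod (hT₀ : T.1 ≠ 0) (hT₁ : T.2 ≠ 0) (hy : HasQuadricOrders T y)
    (hr : Reprod T y z) : HasQuadricOrders T z :=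
  hr.elim (hy.of_reprod0 hT₀) fun hr => (hy.swap.of_reprod0 (z := z.swap) hT₁ hr).swap

theorem of_reflTransGen (hT₀ : T.1 ≠ 0) (hT₁ : T.2 ≠ 0) (hy : HasQuadricOrders T y)
    (hyz : Relation.ReflTransGen (Reprod T) y z) : HasQuadricOrders T z := by
  induction hyz with
  | refl => exact hy
  | tail _ hr ih => exact ih.of_reprod hT₀ hT₁ hr

theorem of_isCriticalPt (hy : IsCriticalPt T y) : HasQuadricOrders T y := by
  obtain ⟨⟨hsq₀, hsq₁, hcop, hcop₀, hcop₁⟩, hy₀, hy₁, -⟩ := hy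
  have hle {p : ℂ[X]} (hp : Squarefree p) (x : ℂ) : p.rootMultiplicity x ≤ 1 :=
    rootMultiplicity_le_one_of_separable (PerfectField.separable_iff_squarefree.2 hp) x
  exact ⟨hy₀, hy₁, fun x => quadricOrders_of_le_one (hle hsq₀ x) (hle hsq₁ x)
    (hcop.rootMultiplicity_eq_zero_or x) (hcop₀.rootMultiplicity_eq_zero_or x)
    (hcop₁.rootMultiplicity_eq_zero_or x)⟩

theorem of_inPopulation (hT₀ : T.1 ≠ 0) (hT₁ : T.2 ≠ 0) (hy : InPopulation T y) :
    HasQuadricOrders T y :=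
  let ⟨_, hc, hyz⟩ := hy
  (of_isCriticalPt hc).of_reflTransGen hT₀ hT₁ hyz

end HasQuadricOrders

/-- Two pairs of monic polynomials lying in populations of critical points corresponding to
the same `(T₀,T₁)` and having the same ratio `y₀/y₁` coincide. -/
theorem population_ratio_unique (T0 T1 y0 y1 yb0 yb1 : ℂ[X])
    (hT0 : T0 ≠ 0) (hT1 : T1 ≠ 0)
    (hy0 : y0.Monic) (hy1 : y1.Monic) (hyb0 : yb0.Monic) (hyb1 : yb1.Monic)
    (hpop : InPopulation (T0, T1) (y0, y1)) (hpopb : InPopulation (T0, T1) (yb0, yb1))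
    (h : y0 * yb1 = yb0 * y1) :
    y0 = yb0 ∧ y1 = yb1 := by
  obtain ⟨-, -, hq⟩ := HasQuadricOrders.of_inPopulation hT0 hT1 hpop
  obtain ⟨-, -, hqb⟩ := HasQuadricOrders.of_inPopulation hT0 hT1 hpopb
  have hord (x : ℂ) : y0.rootMultiplicity x = yb0.rootMultiplicity x ∧
      y1.rootMultiplicity x = yb1.rootMultiplicity x := by
    refine (hq x).eq_of_add_eq (hqb x) ?_
    rw [← rootMultiplicity_mul (hy0.mul hyb1).ne_zero, h,
      rootMultiplicity_mul (hyb0.mul hy1).ne_zero]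
  exact ⟨hy0.eq_of_rootMultiplicity_eq hyb0 fun x => (hord x).1,
    hy1.eq_of_rootMultiplicity_eq hyb1 fun x => (hord x).2⟩

end
end

section
/- Let T₀, T₁, y₀, y₁ be nonzero complex polynomials and let f₀, f₁ be nonzero monic complex polynomials such that f₁² divides T₀·f₀² and f₀² divides T₁·f₁²; set T₀° = T₀·f₀²/f₁² and T₁° = T₁·f₁²/f₀². If (y₀,y₁) is fertile with respect to (T₀,T₁), then (f₀·y₀, f₁·y₁) is fertile with respect to (T₀°,T₁°). -/
open Polynomial

noncomputable section

theorem pWr_mul_mul (f y z : ℂ[X]) : pWr (f * y) (f * z) = f ^ 2 * pWr y z := by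
  simp only [pWr, derivative_mul]
  ring

theorem Fertile.mul {T Tc y : ℂ[X] × ℂ[X]} {f0 f1 : ℂ[X]} (hfert : Fertile T y)
    (hf0 : f0 ≠ 0) (hf1 : f1 ≠ 0)
    (hd0 : T.1 * f0 ^ 2 = f1 ^ 2 * Tc.1) (hd1 : T.2 * f1 ^ 2 = f0 ^ 2 * Tc.2) :
    Fertile Tc (f0 * y.1, f1 * y.2) := by
  obtain ⟨hy0, hy1, ty0, ty1, h0, h1⟩ := hfert
  refine ⟨mul_ne_zero hf0 hy0, mul_ne_zero hf1 hy1, f0 * ty0, f1 * ty1, ?_, ?_⟩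
  · rw [pWr_mul_mul, h0]
    linear_combination y.2 ^ 2 * hd0
  · rw [pWr_mul_mul, h1]
    linear_combination y.1 ^ 2 * hd1

theorem fertile_mul_general (T0 T1 y0 y1 f0 f1 T0c T1c : ℂ[X])
    (hf0 : f0.Monic) (hf1 : f1.Monic)
    (hd0 : T0 * f0 ^ 2 = f1 ^ 2 * T0c) (hd1 : T1 * f1 ^ 2 = f0 ^ 2 * T1c)
    (hfert : Fertile (T0, T1) (y0, y1)) :
    Fertile (T0c, T1c) (f0 * y0, f1 * y1) :=
  hfert.mul (Tc := (T0c, T1c)) hf0.ne_zero hf1.ne_zero hd0 hd1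

/-- If `(y₀,y₁)` is fertile with respect to `(T₀,T₁)`, `f₀, f₁` are monic, `f₁²` divides
`T₀·f₀²` with quotient `T₀°` and `f₀²` divides `T₁·f₁²` with quotient `T₁°`, then
`(f₀·y₀, f₁·y₁)` is fertile with respect to `(T₀°, T₁°)`. -/
theorem fertile_mul (T0 T1 y0 y1 f0 f1 T0c T1c : ℂ[X])
    (hT0 : T0 ≠ 0) (hT1 : T1 ≠ 0) (hy0 : y0 ≠ 0) (hy1 : y1 ≠ 0)
    (hf0 : f0.Monic) (hf1 : f1.Monic)
    (hd0 : T0 * f0 ^ 2 = f1 ^ 2 * T0c) (hd1 : T1 * f1 ^ 2 = f0 ^ 2 * T1c)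
    (hfert : Fertile (T0, T1) (y0, y1)) :
    Fertile (T0c, T1c) (f0 * y0, f1 * y1) :=
  fertile_mul_general T0 T1 y0 y1 f0 f1 T0c T1c hf0 hf1 hd0 hd1 hfert
end
end

section
/- Let T₀, T₁, y₀, y₁ be nonzero complex polynomials and let f₀, f₁ be nonzero monic complex polynomials such that f₁² divides T₀·f₀² and f₀² divides T₁·f₁²; set T₀° = T₀·f₀²/f₁² and T₁° = T₁·f₁²/f₀². Then: (1) if (y₀,y₁) is super-fertile with respect to (T₀,T₁), then (f₀·y₀, f₁·y₁) is super-fertile with respect to (T₀°,T₁°); (2) assuming (y₀,y₁) is fertile with respect to (T₀,T₁), a pair is obtained from (f₀·y₀, f₁·y₁) by a reproduction in direction i with respect to (T₀°,T₁°) if and only if it equals (f₀·y₀^{[i]}, f₁·y₁^{[i]}) where (y₀^{[i]},y₁^{[i]}) is obtained from (y₀,y₁) by a reproduction in direction i with respect to (T₀,T₁). -/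
open Polynomial

noncomputable section

/-!
Over a field of characteristic zero the kernel of `Wr(u, ·)` is the line through `u` (after dividing
`u` and a kernel element by their gcd, both are coprime with vanishing Wronskian, hence constant).
So once `Wr(u, t) = s` has a solution `t` (here: fertility), its solutions form the coset `t + ℂ·u`,
and since `Wr(f u, f w) = f² Wr(u, w)`, the solutions of `Wr(f u, z) = f² s` are exactly the `f w`.
With `u = yᵢ`, `f = fᵢ` and `f² s = Tᵢ°·(f_{1-i} y_{1-i})²` this says that the reproductions of
`(f₀y₀, f₁y₁)` with respect to `T°` are those of `(y₀, y₁)` with respect to `T`, multiplied by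
`(f₀, f₁)`. Following a chain of reproductions step by step, every descendant of `(f₀y₀, f₁y₁)` is
`(f₀w₀, f₁w₁)` for a descendant `w` of `(y₀, y₁)`, which is fertile if `(y₀, y₁)` is super-fertile.
-/

section Wronskian

variable {R : Type*} [CommRing R]

theorem wronskian_mul_mul (f a b : R[X]) : wronskian (f * a) (f * b) = f ^ 2 * wronskian a b := by
  simp only [wronskian, derivative_mul]; ring

theorem wronskian_add_C_mul_self (u t : R[X]) (c : R) :
    wronskian u (t + C c * u) = wronskian u t := by
  simp only [wronskian, derivative_add, derivative_mul, derivative_C]; ring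

variable {K : Type*} [Field K] [CharZero K]

theorem exists_eq_C_mul_of_wronskian_eq_zero {u d : K[X]} (hu : u ≠ 0)
    (h : wronskian u d = 0) : ∃ c : K, d = C c * u := by
  classical
  obtain ⟨a, b, hua, hdb, hunit⟩ := extract_gcd u d
  set g := gcd u d
  have hg : g ≠ 0 := gcd_ne_zero_of_left hu
  have hab : g ^ 2 * wronskian a b = 0 := by rw [← wronskian_mul_mul, ← hua, ← hdb, h]
  obtain ⟨ha', hb'⟩ := ((gcd_isUnit_iff a b).mp hunit).wronskian_eq_zero_iff.mp
    ((mul_eq_zero.mp hab).resolve_left (pow_ne_zero 2 hg))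
  rw [eq_C_of_derivative_eq_zero ha'] at hua
  rw [eq_C_of_derivative_eq_zero hb'] at hdb
  have ha : a.coeff 0 ≠ 0 := fun h0 ↦ hu (by simpa [h0] using hua)
  refine ⟨b.coeff 0 / a.coeff 0, ?_⟩
  rw [hdb, hua, mul_left_comm, ← C_mul, div_mul_cancel₀ _ ha]

theorem wronskian_mul_left_eq_iff {f u t s : K[X]} (hf : f ≠ 0) (hu : u ≠ 0)
    (ht : wronskian u t = s) (z : K[X]) :
    wronskian (f * u) z = f ^ 2 * s ↔ ∃ w, wronskian u w = s ∧ z = f * w := by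
  refine ⟨fun hz ↦ ?_, fun ⟨w, hw, hzw⟩ ↦ by rw [hzw, wronskian_mul_mul, hw]⟩
  have hker : wronskian (f * u) (z - f * t) = 0 := by
    rw [sub_eq_add_neg, wronskian_add_right, wronskian_neg_right, wronskian_mul_mul, ht, hz,
      add_neg_cancel]
  obtain ⟨c, hc⟩ := exists_eq_C_mul_of_wronskian_eq_zero (mul_ne_zero hf hu) hker
  refine ⟨t + C c * u, by rw [wronskian_add_C_mul_self, ht], ?_⟩
  linear_combination hc

end Wronskian

theorem pWr_eq_wronskian (f g : ℂ[X]) : pWr f g = wronskian f g := rfl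

theorem pWr_mul_eq_iff {T Tc f g u v t : ℂ[X]} (hf : f ≠ 0) (hu : u ≠ 0)
    (hd : T * f ^ 2 = g ^ 2 * Tc) (ht : pWr u t = T * v ^ 2) (z : ℂ[X]) :
    pWr (f * u) z = Tc * (g * v) ^ 2 ↔ ∃ w, pWr u w = T * v ^ 2 ∧ z = f * w := by
  have hrhs : Tc * (g * v) ^ 2 = f ^ 2 * (T * v ^ 2) := by linear_combination (-v ^ 2) * hd
  simp only [pWr_eq_wronskian] at ht ⊢
  rw [hrhs]
  exact wronskian_mul_left_eq_iff hf hu ht z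

section Rescaling

-- `T * f ^ 2 = f.swap ^ 2 * Tc` is the pair of conditions `Tᵢ fᵢ² = f_{1-i}² Tᵢ°`, as `Prod`
-- multiplication is componentwise.
variable {T Tc f y : ℂ[X] × ℂ[X]}

theorem reprod0_mul_iff (hf0 : f.1 ≠ 0) (hd : T * f ^ 2 = f.swap ^ 2 * Tc) (hy0 : y.1 ≠ 0)
    {t : ℂ[X]} (ht : pWr y.1 t = T.1 * y.2 ^ 2) (z : ℂ[X] × ℂ[X]) :
    Reprod0 Tc (f * y) z ↔ ∃ w, Reprod0 T y w ∧ z = f * w := by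
  have hd0 : T.1 * f.1 ^ 2 = f.2 ^ 2 * Tc.1 := congrArg Prod.fst hd
  simp only [Reprod0, Prod.fst_mul, Prod.snd_mul, pWr_mul_eq_iff hf0 hy0 hd0 ht]
  constructor
  · rintro ⟨hz2, w, hw, hz1⟩
    exact ⟨(w, y.2), ⟨rfl, hw⟩, Prod.ext hz1 hz2⟩
  · rintro ⟨w, ⟨hw2, hw⟩, rfl⟩
    exact ⟨by rw [Prod.snd_mul, hw2], w.1, hw, rfl⟩

theorem reprod1_mul_iff (hf1 : f.2 ≠ 0) (hd : T * f ^ 2 = f.swap ^ 2 * Tc) (hy1 : y.2 ≠ 0)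
    {t : ℂ[X]} (ht : pWr y.2 t = T.2 * y.1 ^ 2) (z : ℂ[X] × ℂ[X]) :
    Reprod1 Tc (f * y) z ↔ ∃ w, Reprod1 T y w ∧ z = f * w := by
  have hd1 : T.2 * f.2 ^ 2 = f.1 ^ 2 * Tc.2 := congrArg Prod.snd hd
  simp only [Reprod1, Prod.fst_mul, Prod.snd_mul, pWr_mul_eq_iff hf1 hy1 hd1 ht]
  constructor
  · rintro ⟨hz1, w, hw, hz2⟩
    exact ⟨(y.1, w), ⟨rfl, hw⟩, Prod.ext hz1 hz2⟩
  · rintro ⟨w, ⟨hw1, hw⟩, rfl⟩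
    exact ⟨by rw [Prod.fst_mul, hw1], w.2, hw, rfl⟩

variable (hf0 : f.1 ≠ 0) (hf1 : f.2 ≠ 0) (hd : T * f ^ 2 = f.swap ^ 2 * Tc)
include hf0 hf1 hd

theorem Fertile.mul_s3 (hy : Fertile T y) : Fertile Tc (f * y) := by
  obtain ⟨hy0, hy1, t0, t1, ht0, ht1⟩ := hy
  exact ⟨mul_ne_zero hf0 hy0, mul_ne_zero hf1 hy1, f.1 * t0, f.2 * t1,
    (pWr_mul_eq_iff hf0 hy0 (congrArg Prod.fst hd) ht0 _).mpr ⟨t0, ht0, rfl⟩,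
    (pWr_mul_eq_iff hf1 hy1 (congrArg Prod.snd hd) ht1 _).mpr ⟨t1, ht1, rfl⟩⟩

theorem SuperFertile.mul_s3 (hy : SuperFertile T y) : SuperFertile Tc (f * y) := by
  suffices lift : ∀ z, Relation.ReflTransGen (Reprod Tc) (f * y) z →
      ∃ w, Relation.ReflTransGen (Reprod T) y w ∧ z = f * w by
    intro z hz
    obtain ⟨w, hw, rfl⟩ := lift z hz
    exact (hy w hw).mul_s3 hf0 hf1 hd
  intro z hz
  induction hz with
  | refl => exact ⟨y, .refl, rfl⟩
  | tail _ hstep ih =>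
    obtain ⟨w, hw, rfl⟩ := ih
    obtain ⟨hw0, hw1, t0, t1, ht0, ht1⟩ := hy w hw
    rcases hstep with hstep | hstep
    · obtain ⟨w', hw', rfl⟩ := (reprod0_mul_iff hf0 hd hw0 ht0 _).mp hstep
      exact ⟨w', hw.tail (.inl hw'), rfl⟩
    · obtain ⟨w', hw', rfl⟩ := (reprod1_mul_iff hf1 hd hw1 ht1 _).mp hstep
      exact ⟨w', hw.tail (.inr hw'), rfl⟩

end Rescaling

theorem superfertile_mul_and_reproduction_general (T0 T1 y0 y1 f0 f1 T0c T1c : ℂ[X])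
    (hf0 : f0.Monic) (hf1 : f1.Monic)
    (hd0 : T0 * f0 ^ 2 = f1 ^ 2 * T0c) (hd1 : T1 * f1 ^ 2 = f0 ^ 2 * T1c) :
    (SuperFertile (T0, T1) (y0, y1) → SuperFertile (T0c, T1c) (f0 * y0, f1 * y1)) ∧
    (Fertile (T0, T1) (y0, y1) →
      (∀ z : ℂ[X] × ℂ[X],
        Reprod0 (T0c, T1c) (f0 * y0, f1 * y1) z ↔
          ∃ w : ℂ[X] × ℂ[X], Reprod0 (T0, T1) (y0, y1) w ∧ z = (f0 * w.1, f1 * w.2)) ∧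
      (∀ z : ℂ[X] × ℂ[X],
        Reprod1 (T0c, T1c) (f0 * y0, f1 * y1) z ↔
          ∃ w : ℂ[X] × ℂ[X], Reprod1 (T0, T1) (y0, y1) w ∧ z = (f0 * w.1, f1 * w.2))) := by
  have hd : ((T0, T1) * (f0, f1) ^ 2 : ℂ[X] × ℂ[X]) = (f0, f1).swap ^ 2 * (T0c, T1c) :=
    Prod.ext hd0 hd1
  refine ⟨fun hy ↦ by simpa only [Prod.mk_mul_mk] using hy.mul_s3 hf0.ne_zero hf1.ne_zero hd, ?_⟩
  rintro ⟨hy0, hy1, t0, t1, ht0, ht1⟩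
  have h0 := reprod0_mul_iff (y := (y0, y1)) hf0.ne_zero hd hy0 ht0
  have h1 := reprod1_mul_iff (y := (y0, y1)) hf1.ne_zero hd hy1 ht1
  simp only [Prod.mk_mul_mk] at h0 h1
  exact ⟨h0, h1⟩

/-- (1) Multiplying a super-fertile pair by monic `f₀, f₁` (with the divisibility conditions)
yields a super-fertile pair w.r.t. the modified `(T₀°,T₁°)`; (2) for a fertile pair,
reproductions of `(f₀·y₀, f₁·y₁)` w.r.t. `(T₀°,T₁°)` in direction `i` correspond exactly to
reproductions of `(y₀,y₁)` w.r.t. `(T₀,T₁)` in direction `i`. -/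
theorem superfertile_mul_and_reproduction (T0 T1 y0 y1 f0 f1 T0c T1c : ℂ[X])
    (hT0 : T0 ≠ 0) (hT1 : T1 ≠ 0) (hy0 : y0 ≠ 0) (hy1 : y1 ≠ 0)
    (hf0 : f0.Monic) (hf1 : f1.Monic)
    (hd0 : T0 * f0 ^ 2 = f1 ^ 2 * T0c) (hd1 : T1 * f1 ^ 2 = f0 ^ 2 * T1c) :
    (SuperFertile (T0, T1) (y0, y1) → SuperFertile (T0c, T1c) (f0 * y0, f1 * y1)) ∧
    (Fertile (T0, T1) (y0, y1) →
      (∀ z : ℂ[X] × ℂ[X],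
        Reprod0 (T0c, T1c) (f0 * y0, f1 * y1) z ↔
          ∃ w : ℂ[X] × ℂ[X], Reprod0 (T0, T1) (y0, y1) w ∧ z = (f0 * w.1, f1 * w.2)) ∧
      (∀ z : ℂ[X] × ℂ[X],
        Reprod1 (T0c, T1c) (f0 * y0, f1 * y1) z ↔
          ∃ w : ℂ[X] × ℂ[X], Reprod1 (T0, T1) (y0, y1) w ∧ z = (f0 * w.1, f1 * w.2))) :=
  superfertile_mul_and_reproduction_general T0 T1 y0 y1 f0 f1 T0c T1c hf0 hf1 hd0 hd1
end
end

section
/- For every integer n ≥ 1 and all complex polynomials f₁, …, f_n, f_{n+1}, χ, the following identity holds: Wr₂( Wr(f₁,…,f_n,χ), Wr(f₁,…,f_n,f_{n+1}) ) = Wr(f₁,…,f_n) · Wr(f₁,…,f_n,χ,f_{n+1}), where Wr₂(u,v) = u·v′ − u′·v is the two-polynomial Wronskian and Wr(…) denotes the higher-order Wronskian determinant. -/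
open Polynomial

noncomputable section

/-- Higher-order Wronskian: determinant of the matrix whose `(j,l)` entry is the
`j`-th formal derivative of `f l` (rows and columns indexed from `0`). -/
def WrN {n : ℕ} (f : Fin n → ℂ[X]) : ℂ[X] :=
  (Matrix.of fun j l : Fin n => (fun q : ℂ[X] => derivative q)^[(j : ℕ)] (f l)).det

/-! The identity is the Desnanot–Jacobi identity for the Wronskian matrix of `f₁,…,f_n,χ,g`:
deleting its last row leaves Wronskians, and deleting the row above it leaves their derivatives,
since differentiating a Wronskian row by row only the last row survives (every other derivative
duplicates the next row). Desnanot–Jacobi is Jacobi's theorem on complementary minors: for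
`M = [[A, B], [C, D]]` with last two columns `[X; Y]` of `adj M`, taking determinants in
`M * [[1, X], [0, Y]] = [[A, 0], [C, det M • 1]]` gives `det Y * det M = det M ^ 2 * det A`,
and `det M` cancels for the generic matrix. -/

open Matrix

namespace Matrix

variable {R : Type*} [CommRing R]

theorem det_toBlocks₂₂_adjugate_mul_det {m k : Type*} [Fintype m] [DecidableEq m] [Fintype k]
    [DecidableEq k] (M : Matrix (m ⊕ k) (m ⊕ k) R) :
    M.adjugate.toBlocks₂₂.det * M.det = M.det ^ Fintype.card k * M.toBlocks₁₁.det := by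
  obtain ⟨A, B, C, D, rfl⟩ : ∃ A B C D, M = fromBlocks A B C D :=
    ⟨_, _, _, _, (fromBlocks_toBlocks M).symm⟩
  set N := (fromBlocks A B C D).adjugate
  have hN : fromBlocks A B C D * N = _ := mul_adjugate _
  rw [← fromBlocks_toBlocks N, fromBlocks_multiply, ← fromBlocks_one, fromBlocks_smul,
    fromBlocks_inj] at hN
  have hMP : fromBlocks A B C D * fromBlocks 1 N.toBlocks₁₂ 0 N.toBlocks₂₂ =
      fromBlocks A 0 C ((fromBlocks A B C D).det • 1) := by
    rw [fromBlocks_multiply, hN.2.1, hN.2.2.2]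
    simp
  have hdet := congrArg det hMP
  rw [det_mul, det_fromBlocks_zero₂₁, det_fromBlocks_zero₁₂, det_smul, det_one, det_one] at hdet
  rw [toBlocks_fromBlocks₁₁]
  linear_combination hdet

theorem det_toBlocks₂₂_adjugate {m k : Type*} [Fintype m] [DecidableEq m] [Fintype k]
    [DecidableEq k] [Nonempty k] (M : Matrix (m ⊕ k) (m ⊕ k) R) :
    M.adjugate.toBlocks₂₂.det = M.det ^ (Fintype.card k - 1) * M.toBlocks₁₁.det := by
  let X := mvPolynomialX (m ⊕ k) (m ⊕ k) ℤ
  suffices hX : X.adjugate.toBlocks₂₂.det = X.det ^ (Fintype.card k - 1) * X.toBlocks₁₁.det by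
    rw [← mvPolynomialX_mapMatrix_aeval ℤ M, ← AlgHom.map_adjugate]
    set φ := MvPolynomial.aeval (R := ℤ) fun p : (m ⊕ k) × (m ⊕ k) => M p.1 p.2
    change (X.adjugate.toBlocks₂₂.map φ).det = (X.map φ).det ^ _ * (X.toBlocks₁₁.map φ).det
    simp only [← AlgHom.mapMatrix_apply, ← AlgHom.map_det, hX, map_mul, map_pow]
  apply mul_right_cancel₀ (det_mvPolynomialX_ne_zero (m ⊕ k) ℤ)
  rw [det_toBlocks₂₂_adjugate_mul_det, mul_right_comm, ← pow_succ,
    Nat.sub_add_cancel Fintype.card_pos]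

theorem det_mul_det_submatrix_castSucc_castSucc {n : ℕ}
    (M : Matrix (Fin (n + 2)) (Fin (n + 2)) R) :
    M.det * (M.submatrix (Fin.castSucc ∘ Fin.castSucc) (Fin.castSucc ∘ Fin.castSucc)).det =
      (M.submatrix Fin.castSucc Fin.castSucc).det *
          (M.submatrix (Fin.last n).castSucc.succAbove (Fin.last n).castSucc.succAbove).det -
        (M.submatrix (Fin.last n).castSucc.succAbove Fin.castSucc).det *
          (M.submatrix Fin.castSucc (Fin.last n).castSucc.succAbove).det := by
  -- the four minors are, up to sign, the entries of the lower right `2 × 2` block of `adj M`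
  have h := det_toBlocks₂₂_adjugate
    (M.submatrix finSumFinEquiv finSumFinEquiv : Matrix (Fin n ⊕ Fin 2) _ R)
  rw [adjugate_submatrix_equiv_self, det_submatrix_equiv_self, Fintype.card_fin,
    det_fin_two] at h
  simp only [toBlocks₂₂, toBlocks₁₁, submatrix_apply, of_apply, finSumFinEquiv_apply_left,
    finSumFinEquiv_apply_right, adjugate_fin_succ_eq_det_submatrix, Fin.val_natAdd, Fin.isValue,
    Fin.coe_ofNat_eq_mod, Nat.zero_mod, Nat.mod_succ, add_zero, Even.add_self, Even.neg_pow,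
    one_pow, one_mul, odd_add_one_self, Odd.neg_one_pow, odd_add_self_one', neg_mul, mul_neg,
    neg_neg, Nat.add_one_sub_one, pow_one] at h
  have h0 : Fin.natAdd n (0 : Fin 2) = (Fin.last n).castSucc := rfl
  have h1 : Fin.natAdd n (1 : Fin 2) = Fin.last (n + 1) := rfl
  rw [h0, h1, Fin.succAbove_last] at h
  change _ = M.det * (M.submatrix (Fin.castSucc ∘ Fin.castSucc)
    (Fin.castSucc ∘ Fin.castSucc)).det at h
  linear_combination -h

end Matrix

namespace Polynomial

variable {R : Type*} [CommRing R]

theorem derivative_det {ι : Type*} [Fintype ι] [DecidableEq ι] (M : Matrix ι ι R[X]) :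
    derivative M.det = ∑ i, (M.updateRow i fun j => derivative (M i j)).det := by
  have hprod (σ : Equiv.Perm ι) (i : ι) :
      ∏ j, (Mᵀ.updateCol i fun j => derivative (M i j)) (σ j) j =
        (∏ j ∈ Finset.univ.erase i, Mᵀ (σ j) j) * derivative (Mᵀ (σ i) i) := by
    have hupd : (fun j => (Mᵀ.updateCol i fun j => derivative (M i j)) (σ j) j) =
        Function.update (fun j => Mᵀ (σ j) j) i (derivative (Mᵀ (σ i) i)) := by
      funext j
      rcases eq_or_ne j i with rfl | hj <;> simp [*]
    rw [hupd, Finset.prod_update_of_mem (Finset.mem_univ i), mul_comm,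
      Finset.sdiff_singleton_eq_erase]
  rw [← det_transpose M]
  simp only [← det_transpose (updateRow M _ _), ← updateCol_transpose, det_apply, map_sum,
    Units.smul_def, map_zsmul, derivative_prod_finset, Finset.smul_sum, hprod]
  exact Finset.sum_comm

def derivativeMatrix {ι κ : Type*} (r : ι → ℕ) (f : κ → R[X]) : Matrix ι κ R[X] :=
  of fun j l => derivative^[r j] (f l)

theorem derivativeMatrix_submatrix {ι κ ι' κ' : Type*} (r : ι → ℕ) (f : κ → R[X])
    (e : ι' → ι) (c : κ' → κ) :
    (derivativeMatrix r f).submatrix e c = derivativeMatrix (r ∘ e) (f ∘ c) :=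
  rfl

theorem derivative_det_derivativeMatrix {ι : Type*} [Fintype ι] [DecidableEq ι] (r : ι → ℕ)
    (f : ι → R[X]) :
    derivative (derivativeMatrix r f).det =
      ∑ i, (derivativeMatrix (Function.update r i (r i + 1)) f).det := by
  rw [derivative_det]
  refine Finset.sum_congr rfl fun i _ => congrArg det ?_
  ext j l
  rcases eq_or_ne j i with rfl | hj
  · simp [derivativeMatrix, Function.iterate_succ_apply']
  · simp [derivativeMatrix, hj]

theorem derivative_det_derivativeMatrix_val {n : ℕ} (f : Fin (n + 1) → R[X]) :
    derivative (derivativeMatrix Fin.val f).det =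
      (derivativeMatrix (Fin.val ∘ (Fin.last n).castSucc.succAbove) f).det := by
  rw [derivative_det_derivativeMatrix, Fintype.sum_eq_single (Fin.last n)]
  · congr 2
    ext j
    induction j using Fin.lastCases with
    | last => simp
    | cast j => simp [Function.update_apply, Fin.ext_iff]; omega
  · intro i hi
    obtain ⟨i, rfl⟩ := Fin.exists_castSucc_eq.mpr hi
    apply det_zero_of_row_eq (Fin.castSucc_lt_succ (i := i)).ne
    funext l
    simp [derivativeMatrix, Function.update_apply, Fin.ext_iff]

end Polynomial

theorem Fin.snoc_snoc_comp_succAbove_castSucc_last {α : Type*} {n : ℕ} (f : Fin n → α)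
    (a b : α) :
    Fin.snoc (Fin.snoc f a) b ∘ (Fin.last n).castSucc.succAbove =
      (Fin.snoc f b : Fin (n + 1) → α) := by
  funext j
  induction j using Fin.lastCases with
  | last => simp
  | cast j => simp [Fin.succAbove_of_castSucc_lt, Fin.castSucc_lt_last]

theorem WrN_eq_det_derivativeMatrix {n : ℕ} (f : Fin n → ℂ[X]) :
    WrN f = (derivativeMatrix Fin.val f).det :=
  rfl

theorem wronskian_identity_general (n : ℕ) (f : Fin n → ℂ[X]) (g χ : ℂ[X]) :
    pWr (WrN (Fin.snoc f χ)) (WrN (Fin.snoc f g)) =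
      WrN f * WrN (Fin.snoc (Fin.snoc f χ) g) := by
  set F : Fin (n + 2) → ℂ[X] := Fin.snoc (Fin.snoc f χ) g
  have hχ : F ∘ Fin.castSucc = Fin.snoc f χ := Fin.snoc_comp_castSucc
  have hf : F ∘ Fin.castSucc ∘ Fin.castSucc = f := by
    rw [← Function.comp_assoc, hχ, Fin.snoc_comp_castSucc]
  have hg : F ∘ (Fin.last n).castSucc.succAbove = Fin.snoc f g :=
    Fin.snoc_snoc_comp_succAbove_castSucc_last f χ g
  have hval (m : ℕ) : (Fin.val ∘ Fin.castSucc : Fin m → ℕ) = Fin.val := rfl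
  have hdj := det_mul_det_submatrix_castSucc_castSucc (derivativeMatrix Fin.val F)
  simp only [derivativeMatrix_submatrix, hf, hχ, hg, ← Function.comp_assoc, hval] at hdj
  simp only [pWr, WrN_eq_det_derivativeMatrix, derivative_det_derivativeMatrix_val]
  linear_combination -hdj

/-- `Wr₂(Wr(f₁,…,f_n,χ), Wr(f₁,…,f_n,f_{n+1})) = Wr(f₁,…,f_n)·Wr(f₁,…,f_n,χ,f_{n+1})`. -/
theorem wronskian_identity (n : ℕ) (hn : 1 ≤ n) (f : Fin n → ℂ[X]) (g χ : ℂ[X]) :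
    pWr (WrN (Fin.snoc f χ)) (WrN (Fin.snoc f g)) =
      WrN f * WrN (Fin.snoc (Fin.snoc f χ) g) :=
  wronskian_identity_general n f g χ
end
end

section
/- Fix nonzero complex polynomials T₀, T₁, an index i ∈ {0,1}, and an admissible sequence (φ_n)_{n≥1}. Let χ be any polynomial with χ′ = T_i. Then for every n ≥ 1: Wr(φ₁,…,φ_n,χ) = (−1)^{n−1} · T_i^n · T_{i+1}^{n−1} · Wr(φ₁,…,φ_{n−1}), where Wr(φ₁,…,φ₀) is interpreted as 1. -/
open Polynomial

noncomputable section

/-- `T₀` and `T₁` extended to all indices by parity: `T_n = T₀` for `n` even, `T₁` for odd. -/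
def Tper (T0 T1 : ℂ[X]) (n : ℕ) : ℂ[X] := if n % 2 = 0 then T0 else T1

/-- A sequence `(φ_n)_{n ≥ 1}` is admissible if `φ₁ = 1` and for each `n ≥ 1` there is `ρ_n`
with `ρ_n′ = T_{i+1}·φ_n` and `φ_{n+1}′ = T_i·ρ_n`, i.e. `φ_{n+1} = ∫T_i∫T_{i+1}φ_n`. -/
def Admissible (T0 T1 : ℂ[X]) (i : ℕ) (φ : ℕ → ℂ[X]) : Prop :=
  φ 1 = 1 ∧ ∀ n, 1 ≤ n → ∃ ρ : ℂ[X],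
    derivative ρ = Tper T0 T1 (i + 1) * φ n ∧ derivative (φ (n + 1)) = Tper T0 T1 i * ρ

/-- `a_{2r} = r²`, `a_{2r+1} = r(r+1)`. -/
def aSeq (n : ℕ) : ℕ := (n / 2) * ((n + 1) / 2)

/-- `W_n = Wr(φ₁, …, φ_n)`. -/
def Wseq (φ : ℕ → ℂ[X]) (n : ℕ) : ℂ[X] := WrN (fun j : Fin n => φ ((j : ℕ) + 1))

/-! Since `φ₁ = 1`, expanding along the first column deletes it and differentiates the
remaining functions, which become `T_i ρ₁, …, T_i ρ_{n-1}, T_i`. By the Leibniz rule the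
derivative matrix of `g f` is a lower triangular matrix with diagonal `g` times that of `f`,
so the common factor comes out as `T_i ^ n`. Cycling the constant `1` to the front costs
`(-1)^(n-1)`, and the same two steps applied to `(1, ρ₁, …, ρ_{n-1})`, with `ρ_k′ = T_{i+1} φ_k`,
give `T_{i+1} ^ (n-1) · Wr(φ₁, …, φ_{n-1})`. -/

section Leibniz

variable {R : Type*} [CommRing R] {m : ℕ}

theorem iterate_derivative_mul_eq_sum_fin (g f : R[X]) (j : Fin m) :
    derivative^[j] (g * f) =
      ∑ k : Fin m, ((j : ℕ).choose k * derivative^[j - k] g) * derivative^[k] f := by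
  rw [iterate_derivative_mul, Fin.sum_univ_eq_sum_range
    (fun k => ((j : ℕ).choose k * derivative^[j - k] g) * derivative^[k] f)]
  refine (Finset.sum_congr rfl fun k _ => ?_).trans
    (Finset.sum_subset (Finset.range_subset_range.mpr j.isLt) fun k _ hk => ?_)
  · rw [nsmul_eq_mul, mul_assoc]
  · rw [Finset.mem_range, not_lt] at hk
    rw [Nat.choose_eq_zero_of_lt hk, Nat.cast_zero, zero_mul, zero_mul]

theorem det_iterate_derivative_mul (g : R[X]) (f : Fin m → R[X]) :
    (Matrix.of fun j l : Fin m => derivative^[j] (g * f l)).det =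
      g ^ m * (Matrix.of fun j l : Fin m => derivative^[j] (f l)).det := by
  let L : Matrix (Fin m) (Fin m) R[X] :=
    .of fun j k => (j : ℕ).choose k * derivative^[j - k] g
  have hL : L.IsLowerTriangular := fun j k (hjk : j < k) => by
    simp [L, Nat.choose_eq_zero_of_lt (Fin.lt_def.mp hjk)]
  calc _ = (L * Matrix.of fun j l : Fin m => derivative^[j] (f l)).det := by
        congr 1
        ext j l
        simp only [Matrix.of_apply, Matrix.mul_apply, L, iterate_derivative_mul_eq_sum_fin]
    _ = _ := by
        rw [Matrix.det_mul, Matrix.det_of_isLowerTriangular L hL]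
        simp [L]

end Leibniz

theorem wrN_mul_left {m : ℕ} (g : ℂ[X]) (f : Fin m → ℂ[X]) :
    WrN (fun l => g * f l) = g ^ m * WrN f :=
  det_iterate_derivative_mul g f

theorem wrN_cons_one {m : ℕ} (f : Fin m → ℂ[X]) :
    WrN (Fin.cons 1 f) = WrN fun l => derivative (f l) := by
  unfold WrN
  rw [Matrix.det_succ_column_zero, Finset.sum_eq_single 0]
  · simp only [Matrix.of_apply, Fin.val_zero, Function.iterate_zero, id_eq, Fin.cons_zero,
      Fin.succAbove_zero, pow_zero, one_mul]
    rfl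
  · intro j _ hj
    simp [iterate_derivative_one (Nat.pos_of_ne_zero (Fin.val_ne_of_ne hj))]
  · simp

theorem wrN_snoc {m : ℕ} (f : Fin m → ℂ[X]) (x : ℂ[X]) :
    WrN (Fin.snoc f x) = (-1) ^ m * WrN (Fin.cons x f) := by
  unfold WrN
  rw [Fin.snoc_eq_cons_rotate]
  have h := Matrix.det_permute' (finRotate (m + 1)) (Matrix.of fun j l : Fin (m + 1) =>
    (fun q : ℂ[X] => derivative q)^[j] ((Fin.cons x f : Fin (m + 1) → ℂ[X]) l))
  rw [sign_finRotate] at h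
  push_cast at h
  exact h

theorem Admissible.exists_antiderivatives {T0 T1 : ℂ[X]} {i : ℕ} {φ : ℕ → ℂ[X]}
    (h : Admissible T0 T1 i φ) :
    ∃ ρ : ℕ → ℂ[X], ∀ k, derivative (ρ k) = Tper T0 T1 (i + 1) * φ (k + 1) ∧
      derivative (φ (k + 2)) = Tper T0 T1 i * ρ k := by
  choose ρ hρ using fun k => h.2 (k + 1) (Nat.le_add_left 1 k)
  exact ⟨ρ, hρ⟩

theorem wronskian_with_antiderivative_general (T0 T1 : ℂ[X])
    (i : ℕ) (φ : ℕ → ℂ[X]) (hφ : Admissible T0 T1 i φ)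
    (χ : ℂ[X]) (hχ : derivative χ = Tper T0 T1 i) (n : ℕ) (hn : 1 ≤ n) :
    WrN (Fin.snoc (fun j : Fin n => φ ((j : ℕ) + 1)) χ) =
      (-1) ^ (n - 1) * Tper T0 T1 i ^ n * Tper T0 T1 (i + 1) ^ (n - 1) * Wseq φ (n - 1) := by
  obtain ⟨m, rfl⟩ := Nat.exists_eq_add_of_le' hn
  obtain ⟨ρ, hρ⟩ := hφ.exists_antiderivatives
  have hφ_cons : (fun j : Fin (m + 1) => φ ((j : ℕ) + 1)) =
      Fin.cons 1 fun j : Fin m => φ ((j : ℕ) + 2) := by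
    funext j
    cases j using Fin.cases <;> simp [hφ.1]
  have hderiv_φ : (fun l => derivative
      ((Fin.snoc (fun j : Fin m => φ ((j : ℕ) + 2)) χ : Fin (m + 1) → ℂ[X]) l)) =
      fun l => Tper T0 T1 i * (Fin.snoc (fun j : Fin m => ρ j) 1 : Fin (m + 1) → ℂ[X]) l := by
    funext l
    cases l using Fin.lastCases <;> simp [hχ, hρ]
  have hderiv_ρ : (fun l : Fin m => derivative (ρ l)) =
      fun l : Fin m => Tper T0 T1 (i + 1) * φ ((l : ℕ) + 1) := by
    funext l
    exact (hρ l).1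
  rw [hφ_cons, ← Fin.cons_snoc_eq_snoc_cons, wrN_cons_one, hderiv_φ, wrN_mul_left, wrN_snoc,
    wrN_cons_one, hderiv_ρ, wrN_mul_left, Wseq, Nat.add_sub_cancel, Nat.succ_eq_add_one]
  ring

/-- For an admissible sequence and `χ` with `χ′ = T_i`:
`Wr(φ₁,…,φ_n,χ) = (−1)^{n−1}·T_i^n·T_{i+1}^{n−1}·Wr(φ₁,…,φ_{n−1})`. -/
theorem wronskian_with_antiderivative (T0 T1 : ℂ[X]) (hT0 : T0 ≠ 0) (hT1 : T1 ≠ 0)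
    (i : ℕ) (hi : i ≤ 1) (φ : ℕ → ℂ[X]) (hφ : Admissible T0 T1 i φ)
    (χ : ℂ[X]) (hχ : derivative χ = Tper T0 T1 i) (n : ℕ) (hn : 1 ≤ n) :
    WrN (Fin.snoc (fun j : Fin n => φ ((j : ℕ) + 1)) χ) =
      (-1) ^ (n - 1) * Tper T0 T1 i ^ n * Tper T0 T1 (i + 1) ^ (n - 1) * Wseq φ (n - 1) :=
  wronskian_with_antiderivative_general T0 T1 i φ hφ χ hχ n hn
end
end

section
/- With the matrix M(λ) and Δ(λ) = det M(λ) as defined (N ≥ 1, p₀ ≠ 0): if Δ(λ) = 0 for all λ ∈ ℂ, then N is even and, writing m = N/2, one has u₋₁ = m(m+1)·p₁/(2·p₀). -/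
open Polynomial

noncomputable section

/-- The `(N+1)×(N+1)` matrix `M(λ)` (rows/columns re-indexed from `0` to `N`; in the paper's
`1,…,N+1` indexing, `M_{r,c} = a_{r−c−1}(λ)` for `c ≤ r`, `M_{r,c} = r·(N−r+1)` for
`c = r+1`, and `0` otherwise, where `a₋₁(λ) = u₋₁` and `a_j(λ) = u_j + λ·p_j` for `j ≥ 0`).
Its entries are polynomials in `λ` (the variable `X`). -/
def Mmat (N : ℕ) (um1 : ℂ) (u p : ℕ → ℂ) : Matrix (Fin (N + 1)) (Fin (N + 1)) ℂ[X] :=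
  Matrix.of fun r c : Fin (N + 1) =>
    if (c : ℕ) = (r : ℕ) then C um1
    else if (c : ℕ) < (r : ℕ) then
      C (u ((r : ℕ) - (c : ℕ) - 1)) + X * C (p ((r : ℕ) - (c : ℕ) - 1))
    else if (c : ℕ) = (r : ℕ) + 1 then C (((((r : ℕ) + 1) * (N - (r : ℕ)) : ℕ) : ℂ))
    else 0

/-- `Δ = det M(λ)`, a polynomial in `λ`. -/
def DeltaPoly (N : ℕ) (um1 : ℂ) (u p : ℕ → ℂ) : ℂ[X] :=
  (Mmat N um1 u p).det

open Finset
open scoped Matrix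

/-!
Back-substitution through the first `N` rows of the lower Hessenberg matrix `M(λ)` produces a
polynomial vector `v` with `v₀ = 1` and `deg v_r ≤ r/2` such that `M v` vanishes outside the last
row; hence `Δ` is the last entry of `M v` times `±` the product of the superdiagonal, which is
nonzero. So `Δ ≡ 0` says that the back-substitution relations hold in row `N` too, where the
superdiagonal weight `(N+1)·0` vanishes. In degree `λ^⌈r/2⌉` these relations become a three-term
recurrence for the coefficients `t_r` of `λ^⌊r/2⌋` in `v_r`. For odd `N` the last row forces
`p₀ t_{N-1} = 0`, which is impossible. For `N = 2m`, weighting the odd-index relations with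
`w_k = C(2k,k)·C(2m-2k,m-k)` makes them telescope to `Σ_k (p₁ β_k - u₋₁ p₀) w_k = 0` with
`β_k = 2k(2m-2k+1)`, and a second telescoping sum gives `Σ β_k w_k = m(m+1)/2 · Σ w_k`.
-/

namespace Matrix

variable {R : Type*} [CommRing R]

theorem det_updateCol_mulVec {n : Type*} [Fintype n] [DecidableEq n] (A : Matrix n n R) (j : n)
    (v : n → R) : (A.updateCol j (A *ᵥ v)).det = v j * A.det := by
  rw [← smul_eq_mul, ← det_updateCol_sum A j v]
  congr 2
  ext k
  simp [mulVec, dotProduct, mul_comm]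

theorem det_updateCol_zero_single_last_of_hessenberg {n : ℕ}
    (A : Matrix (Fin (n + 1)) (Fin (n + 1)) R)
    (hA : ∀ i j : Fin (n + 1), i.val + 1 < j.val → A i j = 0) :
    (A.updateCol 0 (Pi.single (Fin.last n) 1)).det =
      (-1) ^ n * ∏ i : Fin n, A i.castSucc i.succ := by
  rw [det_succ_column_zero, Finset.sum_eq_single (Fin.last n)]
  · have htri : (A.submatrix Fin.castSucc Fin.succ).IsLowerTriangular := fun i j hij =>
      hA _ _ (by simpa using hij)
    have hsub : (A.updateCol 0 (Pi.single (Fin.last n) 1)).submatrix Fin.castSucc Fin.succ =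
        A.submatrix Fin.castSucc Fin.succ := by
      ext i j
      simp
    simp [Fin.succAbove_last, hsub, det_of_isLowerTriangular _ htri]
  · intro i _ hi
    simp [Pi.single_eq_of_ne hi]
  · simp

theorem det_eq_of_mulVec_eq_single_last {n : ℕ} {A : Matrix (Fin (n + 1)) (Fin (n + 1)) R}
    (hA : ∀ i j : Fin (n + 1), i.val + 1 < j.val → A i j = 0) {v : Fin (n + 1) → R} {w : R}
    (hv : v 0 = 1) (hAv : A *ᵥ v = Pi.single (Fin.last n) w) :
    A.det = (-1) ^ n * (∏ i : Fin n, A i.castSucc i.succ) * w := by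
  calc A.det = (A.updateCol 0 (A *ᵥ v)).det := by rw [det_updateCol_mulVec, hv, one_mul]
    _ = w * (A.updateCol 0 (Pi.single (Fin.last n) 1)).det := by
      rw [hAv, ← det_updateCol_smul, ← Pi.single_smul, smul_eq_mul, mul_one]
    _ = _ := by rw [det_updateCol_zero_single_last_of_hessenberg A hA]; ring

end Matrix

namespace Polynomial

lemma natDegree_C_add_X_mul_C_le {R : Type*} [Semiring R] (a b : R) :
    (C a + X * C b).natDegree ≤ 1 := by
  rw [natDegree_C_add]
  exact (natDegree_mul_C_le _ _).trans natDegree_X_le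

lemma coeff_C_add_X_mul_C_mul_succ {R : Type*} [CommSemiring R] (a b : R) (f : R[X]) (k : ℕ) :
    ((C a + X * C b) * f).coeff (k + 1) = a * f.coeff (k + 1) + b * f.coeff k := by
  rw [add_mul, coeff_add, coeff_C_mul, mul_assoc, coeff_X_mul, coeff_C_mul]

end Polynomial

def binomWeight (m j : ℕ) : ℂ := ((j.centralBinom * (m - j).centralBinom : ℕ) : ℂ)

lemma binomWeight_succ_mul {m k : ℕ} (h : k + 1 ≤ m) :
    binomWeight m (k + 1) * ((2 * k + 2) * (2 * m - 2 * k - 1)) =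
      binomWeight m k * ((2 * k + 1) * (2 * m - 2 * k)) := by
  obtain ⟨n, rfl⟩ : ∃ n, m = k + 1 + n := ⟨m - (k + 1), by omega⟩
  have hk : ((k + 1 : ℕ) : ℂ) * (k + 1).centralBinom = 2 * (2 * k + 1) * k.centralBinom := by
    exact_mod_cast Nat.succ_mul_centralBinom_succ k
  have hn : ((n + 1 : ℕ) : ℂ) * (n + 1).centralBinom = 2 * (2 * n + 1) * n.centralBinom := by
    exact_mod_cast Nat.succ_mul_centralBinom_succ n
  simp only [binomWeight, show k + 1 + n - (k + 1) = n by omega,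
    show k + 1 + n - k = n + 1 by omega]
  push_cast at hk hn ⊢
  linear_combination 2 * (2 * (n : ℂ) + 1) * n.centralBinom * hk
    - 2 * (2 * (k : ℂ) + 1) * k.centralBinom * hn

lemma binomWeight_ne_zero (m j : ℕ) : binomWeight m j ≠ 0 := by
  rw [binomWeight, Nat.cast_ne_zero]
  exact Nat.mul_ne_zero j.centralBinom_ne_zero (m - j).centralBinom_ne_zero

lemma sum_range_binomWeight_ne_zero (m : ℕ) : ∑ j ∈ range (m + 1), binomWeight m j ≠ 0 := by
  simp only [binomWeight, ← Nat.cast_sum, Nat.cast_ne_zero]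
  refine (Finset.sum_pos (fun j _ => ?_) nonempty_range_add_one).ne'
  exact Nat.mul_pos j.centralBinom_pos (m - j).centralBinom_pos

lemma sum_range_mul_binomWeight_partial {m k : ℕ} (h : k ≤ m) :
    ∑ j ∈ range (k + 1), (2 * j * (2 * m - 2 * j + 1) - m * (m + 1) / 2 : ℂ) * binomWeight m j =
      (2 * k - m - 1) * (2 * k + 1) * (m - k) * binomWeight m k / 2 := by
  induction k with
  | zero => simp; ring
  | succ k ih =>
    rw [sum_range_succ, ih (by omega)]
    have hw := binomWeight_succ_mul h
    push_cast
    linear_combination (-(2 * (k : ℂ) - m - 1) / 4) * hw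

lemma sum_range_mul_binomWeight (m : ℕ) :
    ∑ j ∈ range (m + 1), (2 * j * (2 * m - 2 * j + 1) : ℂ) * binomWeight m j =
      m * (m + 1) / 2 * ∑ j ∈ range (m + 1), binomWeight m j := by
  have h := sum_range_mul_binomWeight_partial (le_refl m)
  rw [sub_self, mul_zero, zero_mul, zero_div] at h
  rw [mul_sum, ← sub_eq_zero, ← sum_sub_distrib, ← h]
  exact sum_congr rfl fun j _ => by ring

namespace Mmat

def superdiag (N r : ℕ) : ℂ := (((r + 1) * (N - r) : ℕ) : ℂ)

lemma superdiag_eq {N r : ℕ} (h : r ≤ N) : superdiag N r = (r + 1) * (N - r) := by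
  rw [superdiag]
  push_cast [Nat.cast_sub h]
  ring

lemma superdiag_ne_zero {N r : ℕ} (h : r < N) : superdiag N r ≠ 0 := by
  rw [superdiag, Nat.cast_ne_zero]
  exact Nat.mul_ne_zero (Nat.succ_ne_zero r) (by omega)

lemma superdiag_self (N : ℕ) : superdiag N N = 0 := by
  simp [superdiag]

/-- Rows `0`, `2s+1`, `2s+2` of `M(λ) v = 0` in degree `λ^⌈r/2⌉`, where `t r` is the coefficient
of `λ^⌊r/2⌋` in `v r`. -/
structure TopCoeffRecurrence (N : ℕ) (um1 p0 p1 : ℂ) (t : ℕ → ℂ) : Prop where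
  row_zero : superdiag N 0 * t 1 = -(um1 * t 0)
  row_odd : ∀ s, 2 * s + 1 ≤ N → superdiag N (2 * s + 1) * t (2 * s + 2) = -(p0 * t (2 * s))
  row_even : ∀ s, 2 * s + 2 ≤ N → superdiag N (2 * s + 2) * t (2 * s + 3) =
    -(um1 * t (2 * s + 2) + p0 * t (2 * s + 1) + p1 * t (2 * s))

namespace TopCoeffRecurrence

variable {N : ℕ} {um1 p0 p1 : ℂ} {t : ℕ → ℂ}

lemma even_ne_zero (h : TopCoeffRecurrence N um1 p0 p1 t) (ht0 : t 0 ≠ 0) (hp0 : p0 ≠ 0) :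
    ∀ k, 2 * k ≤ N → t (2 * k) ≠ 0 := by
  intro k
  induction k with
  | zero => simpa using ht0
  | succ k ih =>
    intro hk htk
    have hrow := h.row_odd k (by omega)
    rw [show 2 * k + 2 = 2 * (k + 1) by ring, htk, mul_zero, zero_eq_neg] at hrow
    exact mul_ne_zero hp0 (ih (by omega)) hrow

theorem even (h : TopCoeffRecurrence N um1 p0 p1 t) (ht0 : t 0 ≠ 0) (hp0 : p0 ≠ 0) : Even N := by
  by_contra hodd
  obtain ⟨s, rfl⟩ := Nat.not_even_iff_odd.mp hodd
  have hrow := h.row_odd s le_rfl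
  rw [superdiag_self, zero_mul, zero_eq_neg] at hrow
  exact mul_ne_zero hp0 (h.even_ne_zero ht0 hp0 s (by omega)) hrow

lemma weighted_odd_eq {m : ℕ} (h : TopCoeffRecurrence (2 * m) um1 p0 p1 t) :
    ∀ k ≤ m, p0 * binomWeight m k * superdiag (2 * m) (2 * k) * t (2 * k + 1) =
      t (2 * k) * ∑ j ∈ range (k + 1),
        (p1 * (2 * j * (2 * m - 2 * j + 1)) - um1 * p0) * binomWeight m j := by
  intro k
  induction k with
  | zero =>
    intro _
    simp only [mul_zero, zero_add, sum_range_one, Nat.cast_zero]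
    linear_combination p0 * binomWeight m 0 * h.row_zero
  | succ k ih =>
    intro hk
    have hb : superdiag (2 * m) (2 * k + 1) = (2 * k + 2) * (2 * m - 2 * k - 1) := by
      rw [superdiag_eq (by omega)]; push_cast; ring
    have hw : binomWeight m (k + 1) * superdiag (2 * m) (2 * k + 1) =
        binomWeight m k * superdiag (2 * m) (2 * k) := by
      rw [hb, superdiag_eq (by omega), binomWeight_succ_mul hk]; push_cast; ring
    set E := binomWeight m k * superdiag (2 * m) (2 * k)
    have hE : E ≠ 0 := mul_ne_zero (binomWeight_ne_zero m k) (superdiag_ne_zero (by omega))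
    have hrow_odd := h.row_odd k (by omega)
    have hrow_even := h.row_even k (by omega)
    rw [hb] at hw hrow_odd
    apply mul_left_cancel₀ hE
    rw [sum_range_succ, show 2 * (k + 1) = 2 * k + 2 by ring]
    push_cast
    set S := ∑ j ∈ range (k + 1),
      (p1 * (2 * j * (2 * m - 2 * j + 1)) - um1 * p0) * binomWeight m j
    set w := binomWeight m (k + 1)
    linear_combination E * p0 * w * hrow_even - p0 * w * ih (by omega)
      - (S * w + E * p1 * w) * hrow_odd + S * t (2 * k + 2) * hw

theorem residue {m : ℕ} (h : TopCoeffRecurrence (2 * m) um1 p0 p1 t) (ht0 : t 0 ≠ 0)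
    (hp0 : p0 ≠ 0) : um1 = m * (m + 1) * p1 / (2 * p0) := by
  have hm := h.weighted_odd_eq m le_rfl
  rw [superdiag_self, mul_zero, zero_mul, eq_comm] at hm
  have hsum := (mul_eq_zero.mp hm).resolve_left (h.even_ne_zero ht0 hp0 m le_rfl)
  have hsplit : ∑ j ∈ range (m + 1),
      (p1 * (2 * j * (2 * m - 2 * j + 1)) - um1 * p0) * binomWeight m j =
        (p1 * (m * (m + 1) / 2) - um1 * p0) * ∑ j ∈ range (m + 1), binomWeight m j := by
    calc _ = p1 * ∑ j ∈ range (m + 1), (2 * j * (2 * m - 2 * j + 1) : ℂ) * binomWeight m j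
          - um1 * p0 * ∑ j ∈ range (m + 1), binomWeight m j := by
          rw [mul_sum, mul_sum, ← sum_sub_distrib]
          exact sum_congr rfl fun _ _ => by ring
      _ = _ := by rw [sum_range_mul_binomWeight]; ring
  rw [hsplit] at hsum
  have hcoef := (mul_eq_zero.mp hsum).resolve_right (sum_range_binomWeight_ne_zero m)
  field_simp
  linear_combination -2 * hcoef

end TopCoeffRecurrence

variable (N : ℕ) (um1 : ℂ) (u p : ℕ → ℂ)

def entry (r c : ℕ) : ℂ[X] :=
  if c = r then C um1
  else if c < r then C (u (r - c - 1)) + X * C (p (r - c - 1))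
  else if c = r + 1 then C (superdiag N r)
  else 0

lemma Mmat_apply (r c : Fin (N + 1)) : Mmat N um1 u p r c = entry N um1 u p r c := rfl

def lowerPart (v : ℕ → ℂ[X]) (r : ℕ) : ℂ[X] :=
  C um1 * v r + ∑ c ∈ range r, (C (u (r - c - 1)) + X * C (p (r - c - 1))) * v c

/-- Back-substitution through the rows `0, …, N - 1` of `M(λ)`, normalised by `v 0 = 1`. -/
def nullVec : ℕ → ℂ[X]
  | 0 => 1
  | r + 1 => -C (superdiag N r)⁻¹ *
      (C um1 * nullVec r + ∑ c : Fin r, (C (u (r - c - 1)) + X * C (p (r - c - 1))) * nullVec c)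

lemma nullVec_zero : nullVec N um1 u p 0 = 1 := by
  rw [nullVec]

lemma nullVec_succ (r : ℕ) :
    nullVec N um1 u p (r + 1) =
      -C (superdiag N r)⁻¹ * lowerPart um1 u p (nullVec N um1 u p) r := by
  rw [nullVec, lowerPart,
    Fin.sum_univ_eq_sum_range (fun c => (C (u (r - c - 1)) + X * C (p (r - c - 1))) *
      nullVec N um1 u p c)]

lemma mulVec_apply (v : ℕ → ℂ[X]) (r : Fin (N + 1)) :
    (Mmat N um1 u p *ᵥ fun c => v c) r =
      lowerPart um1 u p v r + C (superdiag N r) * v (r + 1) := by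
  set g : ℕ → ℂ[X] := fun c => entry N um1 u p r c * v c
  have hfar : ∀ c, (r : ℕ) + 2 ≤ c → g c = 0 := fun c hc => by
    simp only [g, entry]
    rw [if_neg (by omega), if_neg (by omega), if_neg (by omega), zero_mul]
  have hlast : g (N + 1) = 0 := by
    rcases (Nat.lt_or_ge (r : ℕ) N) with hr | hr
    · exact hfar _ (by omega)
    · simp only [g, entry]
      rw [if_neg (by omega), if_neg (by omega), if_pos (by omega),
        show (r : ℕ) = N by omega, superdiag_self, C_0, zero_mul]
  calc (Mmat N um1 u p *ᵥ fun c => v c) r = ∑ c ∈ range (N + 2), g c := by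
        rw [sum_range_succ, hlast, add_zero, ← Fin.sum_univ_eq_sum_range]
        rfl
    _ = ∑ c ∈ range ((r : ℕ) + 2), g c :=
        (sum_subset (range_subset_range.mpr (by omega)) fun c _ hc =>
          hfar c (by simpa using hc)).symm
    _ = _ := by
        have hlow : ∀ c ∈ range (r : ℕ),
            g c = (C (u (r - c - 1)) + X * C (p (r - c - 1))) * v c :=
          fun c hc => by simp [g, entry, (mem_range.mp hc).ne, mem_range.mp hc]
        have hdiag : g r = C um1 * v r := by simp [g, entry]
        have hsup : g (r + 1) = C (superdiag N r) * v (r + 1) := by simp [g, entry]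
        rw [sum_range_succ, sum_range_succ, sum_congr rfl hlow, hdiag, hsup, lowerPart]
        ring

lemma Mmat_apply_eq_zero {r c : Fin (N + 1)} (h : (r : ℕ) + 1 < c) : Mmat N um1 u p r c = 0 := by
  rw [Mmat_apply, entry, if_neg (by omega), if_neg (by omega), if_neg (by omega)]

lemma Mmat_castSucc_succ (i : Fin N) :
    Mmat N um1 u p i.castSucc i.succ = C (superdiag N i) := by
  rw [Mmat_apply, entry, Fin.val_castSucc, Fin.val_succ, if_neg (by omega), if_neg (by omega),
    if_pos rfl]

lemma mulVec_nullVec :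
    (Mmat N um1 u p *ᵥ fun c => nullVec N um1 u p c) =
      Pi.single (Fin.last N) (lowerPart um1 u p (nullVec N um1 u p) N) := by
  funext r
  rw [mulVec_apply]
  by_cases hr : r = Fin.last N
  · subst hr
    rw [Fin.val_last, superdiag_self, C_0, zero_mul, add_zero, Pi.single_eq_same]
  · have hrN : (r : ℕ) < N := Fin.val_lt_last hr
    rw [Pi.single_eq_of_ne hr, nullVec_succ, ← mul_assoc, mul_neg, ← C_mul,
      mul_inv_cancel₀ (superdiag_ne_zero hrN), C_1]
    ring

theorem DeltaPoly_eq :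
    DeltaPoly N um1 u p =
      (-1) ^ N * (∏ i : Fin N, C (superdiag N i)) * lowerPart um1 u p (nullVec N um1 u p) N := by
  rw [DeltaPoly, Matrix.det_eq_of_mulVec_eq_single_last (fun _ _ => Mmat_apply_eq_zero N um1 u p)
    (nullVec_zero N um1 u p) (mulVec_nullVec N um1 u p)]
  simp only [Mmat_castSucc_succ]

theorem DeltaPoly_eq_zero_iff :
    DeltaPoly N um1 u p = 0 ↔ lowerPart um1 u p (nullVec N um1 u p) N = 0 := by
  rw [DeltaPoly_eq, mul_eq_zero, or_iff_right]
  exact mul_ne_zero (pow_ne_zero _ (neg_ne_zero.mpr one_ne_zero))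
    (prod_ne_zero_iff.mpr fun i _ => C_ne_zero.mpr (superdiag_ne_zero i.2))

lemma natDegree_lowerPart_le {v : ℕ → ℂ[X]} {r : ℕ} (hv : ∀ c ≤ r, (v c).natDegree ≤ c / 2) :
    (lowerPart um1 u p v r).natDegree ≤ (r + 1) / 2 := by
  refine natDegree_add_le_of_degree_le ((natDegree_C_mul_le _ _).trans ((hv r le_rfl).trans ?_))
    (natDegree_sum_le_of_forall_le _ _ fun c hc => ?_)
  · omega
  · have hc := mem_range.mp hc
    refine (natDegree_mul_le_of_le (natDegree_C_add_X_mul_C_le _ _) (hv c hc.le)).trans ?_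
    omega

lemma natDegree_nullVec_le (r : ℕ) : (nullVec N um1 u p r).natDegree ≤ r / 2 := by
  induction r using Nat.strong_induction_on with
  | _ r ih =>
    rcases r with _ | r
    · simp [nullVec_zero]
    · rw [nullVec_succ, neg_mul, natDegree_neg]
      exact (natDegree_C_mul_le _ _).trans
        (natDegree_lowerPart_le um1 u p fun c hc => ih c (by omega))

lemma coeff_lowerPart_odd {v : ℕ → ℂ[X]} (hv : ∀ c, (v c).natDegree ≤ c / 2) (s : ℕ) :
    (lowerPart um1 u p v (2 * s + 1)).coeff (s + 1) = p 0 * (v (2 * s)).coeff s := by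
  have hzero : ∀ c, (v c).natDegree < s + 1 → (v c).coeff (s + 1) = 0 := fun c hc =>
    coeff_eq_zero_of_natDegree_lt hc
  rw [lowerPart, coeff_add, coeff_C_mul, hzero (2 * s + 1) (by have := hv (2 * s + 1); omega),
    mul_zero, zero_add, finsetSum_coeff, sum_range_succ, sum_eq_zero fun c hc => ?_]
  · rw [coeff_C_add_X_mul_C_mul_succ, hzero (2 * s) (by have := hv (2 * s); omega),
      show 2 * s + 1 - 2 * s - 1 = 0 by omega]
    ring
  · have hc := mem_range.mp hc
    rw [coeff_C_add_X_mul_C_mul_succ, coeff_eq_zero_of_natDegree_lt (by have := hv c; omega),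
      coeff_eq_zero_of_natDegree_lt (p := v c) (by have := hv c; omega)]
    ring

lemma coeff_lowerPart_even {v : ℕ → ℂ[X]} (hv : ∀ c, (v c).natDegree ≤ c / 2) (s : ℕ) :
    (lowerPart um1 u p v (2 * s + 2)).coeff (s + 1) = um1 * (v (2 * s + 2)).coeff (s + 1) +
      p 0 * (v (2 * s + 1)).coeff s + p 1 * (v (2 * s)).coeff s := by
  have hzero : ∀ c, (v c).natDegree < s + 1 → (v c).coeff (s + 1) = 0 := fun c hc =>
    coeff_eq_zero_of_natDegree_lt hc
  rw [lowerPart, coeff_add, coeff_C_mul, finsetSum_coeff, sum_range_succ, sum_range_succ,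
    sum_eq_zero fun c hc => ?_]
  · rw [coeff_C_add_X_mul_C_mul_succ, coeff_C_add_X_mul_C_mul_succ,
      hzero (2 * s) (by have := hv (2 * s); omega),
      hzero (2 * s + 1) (by have := hv (2 * s + 1); omega),
      show 2 * s + 2 - 2 * s - 1 = 1 by omega, show 2 * s + 2 - (2 * s + 1) - 1 = 0 by omega]
    ring
  · have hc := mem_range.mp hc
    rw [coeff_C_add_X_mul_C_mul_succ, coeff_eq_zero_of_natDegree_lt (by have := hv c; omega),
      coeff_eq_zero_of_natDegree_lt (p := v c) (by have := hv c; omega)]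
    ring

lemma C_superdiag_mul_nullVec_succ (hN : lowerPart um1 u p (nullVec N um1 u p) N = 0) {r : ℕ}
    (hr : r ≤ N) :
    C (superdiag N r) * nullVec N um1 u p (r + 1) = -lowerPart um1 u p (nullVec N um1 u p) r := by
  rcases hr.lt_or_eq with hr | rfl
  · rw [nullVec_succ, ← mul_assoc, mul_neg, ← C_mul, mul_inv_cancel₀ (superdiag_ne_zero hr), C_1,
      neg_mul, one_mul]
  · rw [superdiag_self, C_0, zero_mul, hN, neg_zero]

theorem topCoeffRecurrence_nullVec (hN : lowerPart um1 u p (nullVec N um1 u p) N = 0) :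
    TopCoeffRecurrence N um1 (p 0) (p 1) fun r => (nullVec N um1 u p r).coeff (r / 2) := by
  have hv := natDegree_nullVec_le N um1 u p
  have hrow : ∀ r ≤ N, superdiag N r * (nullVec N um1 u p (r + 1)).coeff ((r + 1) / 2) =
      -(lowerPart um1 u p (nullVec N um1 u p) r).coeff ((r + 1) / 2) := fun r hr => by
    rw [← coeff_C_mul, C_superdiag_mul_nullVec_succ N um1 u p hN hr, coeff_neg]
  refine ⟨?_, fun s hs => ?_, fun s hs => ?_⟩
  · simpa [lowerPart, nullVec_zero] using hrow 0 (Nat.zero_le N)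
  · have h := hrow (2 * s + 1) hs
    rw [show (2 * s + 1 + 1) / 2 = s + 1 by omega, coeff_lowerPart_odd um1 u p hv] at h
    simpa [show (2 * s + 2) / 2 = s + 1 by omega, show 2 * s / 2 = s by omega] using h
  · have h := hrow (2 * s + 2) hs
    rw [show (2 * s + 2 + 1) / 2 = s + 1 by omega, coeff_lowerPart_even um1 u p hv] at h
    simpa [show (2 * s + 3) / 2 = s + 1 by omega, show (2 * s + 2) / 2 = s + 1 by omega,
      show (2 * s + 1) / 2 = s by omega, show 2 * s / 2 = s by omega] using h

end Mmat

theorem residue_formula_general (N : ℕ) (um1 : ℂ) (u p : ℕ → ℂ) (hp0 : p 0 ≠ 0)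
    (h : ∀ lam : ℂ, (DeltaPoly N um1 u p).eval lam = 0) :
    Even N ∧ um1 = ((N / 2 : ℕ) : ℂ) * (((N / 2 : ℕ) : ℂ) + 1) * p 1 / (2 * p 0) := by
  have hΔ : DeltaPoly N um1 u p = 0 := Polynomial.funext fun lam => by rw [h lam, eval_zero]
  have hrec := Mmat.topCoeffRecurrence_nullVec N um1 u p
    ((Mmat.DeltaPoly_eq_zero_iff N um1 u p).mp hΔ)
  have ht0 : (Mmat.nullVec N um1 u p 0).coeff (0 / 2) ≠ 0 := by simp [Mmat.nullVec_zero]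
  have heven := hrec.even ht0 hp0
  refine ⟨heven, ?_⟩
  obtain ⟨m, rfl⟩ := heven.two_dvd
  rw [Nat.mul_div_cancel_left m two_pos]
  exact hrec.residue ht0 hp0

/-- If `Δ(λ) = 0` for all `λ ∈ ℂ`, then `N` is even and, with `m = N/2`,
`u₋₁ = m(m+1)·p₁/(2·p₀)`. -/
theorem residue_formula (N : ℕ) (hN : 1 ≤ N) (um1 : ℂ) (u p : ℕ → ℂ) (hp0 : p 0 ≠ 0)
    (h : ∀ lam : ℂ, (DeltaPoly N um1 u p).eval lam = 0) :
    Even N ∧ um1 = ((N / 2 : ℕ) : ℂ) * (((N / 2 : ℕ) : ℂ) + 1) * p 1 / (2 * p 0) :=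
  residue_formula_general N um1 u p hp0 h
end
end
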